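/- arXiv:2308.00693 — 7 statements merged into one kernel-verified Lean document; each statement's English description precedes it below -/
import Mathlib

section
/- If V is a vertex algebra with an odd endomorphism D satisfying [D,D] = 2∂ (supercommutator), D is an odd derivation of the normally ordered product, and D is an odd derivation of the λ-bracket (i.e. D[a_λ b] = [Da_λ b] + (-1)^{p(a)}[a_λ Db] with [D,λ]=0), then the Λ-bracket defined by [a_Λ b] := [Da_λ b] + χ[a_λ b] satisfies the non-commutative Wick formula of N=1 SUSY vertex algebras: [a_Λ :bc:] = :[a_Λ b]c: + (-1)^{(p(a)+1)p(b)}:b[a_Λ c]: + ∫_0^Λ [[a_Λ b]_Γ c] dΓ. -/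
open scoped BigOperators
noncomputable section

namespace VAx

/-- `(-1)^p` for a parity `p` (`true` = odd). -/
def psgn (p : Bool) : ℂ := if p then -1 else 1

/-- `(-1)^{pq}` for parities `p`, `q`. -/
def sgn (p q : Bool) : ℂ := if p && q then -1 else 1

/-- Multiplication by `λ` on a `λ`-expansion `f = ∑ λ^m • f m`. -/
def lam {W : Type*} [AddCommGroup W] (f : ℕ → W) : ℕ → W :=
  fun m => match m with
  | 0 => 0
  | n + 1 => f n

variable (V : Type*) [AddCommGroup V] [Module ℂ V]

/-- Underlying data of a (super) Lie conformal algebra: a `ℤ/2ℤ`-grading (`part false` the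
even part, `part true` the odd part), an even derivation `∂ = der`, and a `λ`-bracket encoded
by its coefficients: `[a_λ b] = ∑_m λ^m • B a b m` (so `B a b m = a_{(m)} b / m!`). -/
structure LCAData where
  part : Bool → Submodule ℂ V
  der : V →ₗ[ℂ] V
  B : V →ₗ[ℂ] V →ₗ[ℂ] (ℕ → V)

/-- Underlying data of a vertex algebra: a Lie conformal algebra datum together with a
vacuum vector and the normally ordered product. -/
structure VAData extends LCAData V where
  one : V
  M : V →ₗ[ℂ] V →ₗ[ℂ] V

variable {V}

namespace LCAData

variable (S : LCAData V)

/-- Coefficientwise form of the Jacobi identity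
`[a_λ [b_γ c]] = [[a_λ b]_{λ+γ} c] + (-1)^{p(a)p(b)} [b_γ [a_λ c]]`
at the coefficient of `λ^m γ^n`. -/
def JacEq (p q : Bool) (a b c : V) (m n : ℕ) : Prop :=
  S.B a (S.B b c n) m =
    (∑ j ∈ Finset.range (m + 1),
      ((Nat.choose (m - j + n) (m - j) : ℂ)) • S.B (S.B a b j) c (m - j + n))
    + sgn p q • S.B b (S.B a c m) n

/-- Coefficientwise form of skew-symmetry `[b_λ a] = (-1)^{p(a)p(b)+1}[a_{-∂-λ} b]`,
given a bound `N` on the support of `[a_λ b]`. -/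
def SkewEq (p q : Bool) (a b : V) (N : ℕ) : Prop :=
  ∀ k, S.B b a k = (- sgn p q) •
    ∑ m ∈ Finset.Icc k N, (((-1 : ℂ)) ^ m * (m.choose k : ℂ)) • ((S.der ^ (m - k)) (S.B a b m))

/-- The axioms of a (super) Lie conformal algebra, expressed coefficientwise on the
`λ`-expansion `[a_λ b] = ∑ λ^m • B a b m`. -/
structure IsLCA : Prop where
  hom_der : ∀ p, ∀ a ∈ S.part p, S.der a ∈ S.part p
  hom_B : ∀ p q a b, a ∈ S.part p → b ∈ S.part q → ∀ m, S.B a b m ∈ S.part (xor p q)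
  sesq1 : ∀ a b, S.B (S.der a) b 0 = 0 ∧ ∀ m, S.B (S.der a) b (m + 1) = - S.B a b m
  sesq2 : ∀ a b, S.B a (S.der b) 0 = S.der (S.B a b 0) ∧
    ∀ m, S.B a (S.der b) (m + 1) = S.der (S.B a b (m + 1)) + S.B a b m
  bfin : ∀ a b, ∃ N, ∀ m, N ≤ m → S.B a b m = 0
  skew : ∀ p q a b N, a ∈ S.part p → b ∈ S.part q →
    (∀ m, N ≤ m → S.B a b m = 0) → S.SkewEq p q a b N
  jacobi : ∀ p q a b c, a ∈ S.part p → b ∈ S.part q → ∀ m n, S.JacEq p q a b c m n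

/-- The supersymmetric extension formulas (SEF1) and (SEF2) for the ordered pair `(x, y)`
(thought of as `(ā, b̄)`), where `p` is the parity of `x` and `D` is the odd endomorphism:
(SEF1) `[Dx_λ Dy] = (-1)^{p(x)+1}(D[Dx_λ y] + λ[x_λ y])`,
(SEF2) `[x_λ Dy] = (-1)^{p(x)+1}([Dx_λ y] - D[x_λ y])`. -/
def SEF (D : Module.End ℂ V) (p : Bool) (x y : V) : Prop :=
  (∀ m, S.B (D x) (D y) m = psgn (!p) • (D (S.B (D x) y m) + lam (S.B x y) m)) ∧
  (∀ m, S.B x (D y) m = psgn (!p) • (S.B (D x) y m - D (S.B x y m)))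

end LCAData

namespace VAData

variable (S : VAData V)

/-- The integral term `∫_0^λ [[a_λ b]_γ c] dγ` of the non-commutative Wick formula, at the
coefficient of `λ^k`, where `f` is the `λ`-expansion of `[a_λ b]`. -/
def wickInt (f : ℕ → V) (c : V) : ℕ → V :=
  fun k => ∑ n ∈ Finset.range k, ((n + 1 : ℂ))⁻¹ • S.B (f (k - 1 - n)) c n

/-- The axioms of a vertex algebra, in the `λ`-bracket formalism, expressed coefficientwise. -/
structure IsVA : Prop where
  isLCA : S.toLCAData.IsLCA
  one_even : S.one ∈ S.part false
  der_one : S.der S.one = 0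
  M_one_left : ∀ a, S.M S.one a = a
  M_one_right : ∀ a, S.M a S.one = a
  B_one_left : ∀ a m, S.B S.one a m = 0
  B_one_right : ∀ a m, S.B a S.one m = 0
  hom_M : ∀ p q a b, a ∈ S.part p → b ∈ S.part q → S.M a b ∈ S.part (xor p q)
  qcomm : ∀ p q a b N, a ∈ S.part p → b ∈ S.part q → (∀ m, N ≤ m → S.B a b m = 0) →
    S.M a b - sgn p q • S.M b a =
      ∑ m ∈ Finset.range (N + 1),
        (((-1 : ℂ) ^ m) * ((m + 1 : ℂ))⁻¹) • ((S.der ^ (m + 1)) (S.B a b m))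
  wick : ∀ p q a b c, a ∈ S.part p → b ∈ S.part q → ∀ k,
    S.B a (S.M b c) k = S.M (S.B a b k) c + sgn p q • S.M b (S.B a c k)
      + S.wickInt (S.B a b) c k

/-- `D` is an odd endomorphism of `V` which is an odd derivation of both the normally ordered
product and the `λ`-bracket. -/
def IsOddDerivation (D : Module.End ℂ V) : Prop :=
  (∀ p, ∀ a ∈ S.part p, D a ∈ S.part (!p)) ∧
  (∀ p a b, a ∈ S.part p → D (S.M a b) = S.M (D a) b + psgn p • S.M a (D b)) ∧
  (∀ p a b m, a ∈ S.part p → D (S.B a b m) = S.B (D a) b m + psgn p • S.B a (D b) m)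

/-- The operator `x ↦ a_{(k)} x` (normalized by `1/k!`). -/
def opAt (a : V) (k : ℕ) : Module.End ℂ V :=
  (LinearMap.proj (R := ℂ) (φ := fun _ : ℕ => V) k).comp (S.B a)

/-- Diagonalizability of an endomorphism. -/
def IsDiag (f : Module.End ℂ V) : Prop :=
  (⨆ μ : ℂ, f.eigenspace μ) = ⊤

/-- `G` is an `N = 1` superconformal vector of `V` with central charge `c`: `G` is odd,
`L := (1/2) G_{(0)} G` is a conformal vector (`L_{(0)} = ∂`, `L_{(1)}` diagonalizable), and the
super-Virasoro relations `[L_λ L] = (∂+2λ)L + (c/12)λ³ |0⟩`, `[L_λ G] = (∂ + (3/2)λ)G`,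
`[G_λ G] = 2L + (c/3)λ² |0⟩` hold. -/
def IsSCV (G : V) (c : ℂ) : Prop :=
  G ∈ S.part true ∧
  S.B G G 1 = 0 ∧
  S.B G G 2 = (c / 3) • S.one ∧
  (∀ m, 3 ≤ m → S.B G G m = 0) ∧
  (S.B ((1 / 2 : ℂ) • S.B G G 0) ((1 / 2 : ℂ) • S.B G G 0) = fun m =>
    match m with
    | 0 => S.der ((1 / 2 : ℂ) • S.B G G 0)
    | 1 => (2 : ℂ) • ((1 / 2 : ℂ) • S.B G G 0)
    | 3 => (c / 12) • S.one
    | _ => 0) ∧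
  (S.B ((1 / 2 : ℂ) • S.B G G 0) G = fun m =>
    match m with
    | 0 => S.der G
    | 1 => (3 / 2 : ℂ) • G
    | _ => 0) ∧
  (∀ x, S.B ((1 / 2 : ℂ) • S.B G G 0) x 0 = S.der x) ∧
  IsDiag (S.opAt ((1 / 2 : ℂ) • S.B G G 0) 1)

/-- The `N = 1` `Λ`-bracket `[a_Λ b] := [Da_λ b] + χ[a_λ b]`, encoded as the pair
`(λ`-expansion of `[Da_λ b]`, `λ`-expansion of `[a_λ b])` (the second component being the
coefficient of `χ`). -/
def SB (D : Module.End ℂ V) (a b : V) : (ℕ → V) × (ℕ → V) :=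
  (S.B (D a) b, S.B a b)

end VAData

end VAx

/-!
With `[a_Λ b] = [Da_λ b] + χ[a_λ b]`, the `χ`-free component of the `N = 1` Wick formula is the
ordinary Wick formula for the pair `(Da, b)`, where `Da` has parity `p(a) + 1`, and the
`χ`-component is the ordinary Wick formula for `(a, b)`, because
`(-1)^{(p(a)+1)p(b)} (-1)^{p(b)} = (-1)^{p(a)p(b)}`.
-/

namespace VAx

theorem sgn_not_mul_psgn (p q : Bool) : sgn (!p) q * psgn q = sgn p q := by
  cases p <;> cases q <;> norm_num [sgn, psgn]

end VAx

open VAx VAx.LCAData VAx.VAData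

theorem stmt_0_general {V : Type*} [AddCommGroup V] [Module ℂ V]
    (S : VAx.VAData V) (hS : S.IsVA) (D : Module.End ℂ V)
    (hD : S.IsOddDerivation D) :
    ∀ (p q : Bool) (a b c : V), a ∈ S.part p → b ∈ S.part q →
      S.SB D a (S.M b c) =
        ( (fun m => S.M (S.B (D a) b m) c
            + VAx.sgn (!p) q • S.M b (S.B (D a) c m)
            + S.wickInt (S.B (D a) b) c m),
          (fun m => S.M (S.B a b m) c
            + (VAx.sgn (!p) q * VAx.psgn q) • S.M b (S.B a c m)
            + S.wickInt (S.B a b) c m) ) := by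
  intro p q a b c ha hb
  rw [sgn_not_mul_psgn]
  exact Prod.ext (funext (hS.wick (!p) q (D a) b c (hD.1 p a ha) hb))
    (funext (hS.wick p q a b c ha hb))

/-- If `V` is a vertex algebra with an odd endomorphism `D` satisfying
`[D,D] = 2∂` (i.e. `D² = ∂`), which is an odd derivation of the normally ordered product and of
the `λ`-bracket, then the `Λ`-bracket `[a_Λ b] := [Da_λ b] + χ[a_λ b]` satisfies the
non-commutative Wick formula of `N = 1` SUSY vertex algebras
`[a_Λ :bc:] = :[a_Λ b]c: + (-1)^{(p(a)+1)p(b)} :b[a_Λ c]: + ∫_0^Λ [[a_Λ b]_Γ c] dΓ`,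
written out componentwise (first component: coefficient of `χ^0`; second: coefficient of `χ`). -/
theorem stmt_0 {V : Type*} [AddCommGroup V] [Module ℂ V]
    (S : VAx.VAData V) (hS : S.IsVA) (D : Module.End ℂ V)
    (hD : S.IsOddDerivation D) (hDD : ∀ x, D (D x) = S.der x) :
    ∀ (p q : Bool) (a b c : V), a ∈ S.part p → b ∈ S.part q →
      S.SB D a (S.M b c) =
        ( (fun m => S.M (S.B (D a) b m) c
            + VAx.sgn (!p) q • S.M b (S.B (D a) c m)
            + S.wickInt (S.B (D a) b) c m),
          (fun m => S.M (S.B a b m) c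
            + (VAx.sgn (!p) q * VAx.psgn q) • S.M b (S.B a c m)
            + S.wickInt (S.B a b) c m) ) :=
  stmt_0_general S hS D hD
end
end

section
/- Let V be an N=1 superconformal vertex algebra with superconformal vector G, conformal vector L of central charge c, and an odd vector v satisfying [L_λ v] = (∂+λ/2)v, [G_λ v] = G_{(0)}v + c₁λ, [v_λ v] = c₂, with (G_{(0)}v)_{(0)} diagonalizable. Then G + ∂v is also a superconformal vector of V, with corresponding conformal vector L + (1/2)∂G_{(0)}v of central charge c + 6c₁ - 3c₂. -/
open scoped BigOperators
noncomputable section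

open VAx VAx.LCAData VAx.VAData

/-!
Put `u = G_{(0)}v`, an even vector, `G' = G + ∂v` and `L' = L + ½∂u`. Sesquilinearity and
skew-symmetry give `[G'_λ G'] = 2L' + ((c + 6c₁ - 3c₂)/3)λ²`. The Jacobi identity, applied to the
triples `(G, G, v)`, `(L, G, v)`, `(v, G, v)` and `(G, v, u)`, gives `[G_λ u] = ∂v + λv`,
`[L_λ u] = (∂ + λ)u + (c₁/2)λ²`, `[u_λ v] = 0` and `[u_λ u] = c₂λ`; expanding bilinearly then yields
the Virasoro relation of central charge `c + 6c₁ - 3c₂` for `L'` and `[L'_λ G'] = (∂ + 3λ/2)G'`.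
Finally `L'_{(1)} = L_{(1)} - ½u_{(0)}`, and these two operators commute by the Jacobi identity for
`(L, u, ·)`, so `L'_{(1)}` is diagonalizable as a sum of commuting diagonalizable operators.
-/

theorem Submodule.mem_of_sum_mem_of_mem_eigenspace {K V : Type*} [Field K] [AddCommGroup V]
    [Module K V] {f : Module.End K V} {p : Submodule K V} (hp : ∀ y ∈ p, f y ∈ p)
    (s : Finset K) {x : K → V} (hx : ∀ μ ∈ s, x μ ∈ f.eigenspace μ)
    (hsum : ∑ μ ∈ s, x μ ∈ p) : ∀ μ ∈ s, x μ ∈ p := by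
  classical
  induction s using Finset.induction_on generalizing x with
  | empty => simp
  | insert a s ha ih =>
    have hx' : ∀ μ ∈ s, x μ ∈ f.eigenspace μ := fun μ hμ => hx μ (Finset.mem_insert_of_mem hμ)
    have hfa : ∑ μ ∈ s, (μ - a) • x μ ∈ p := by
      convert p.sub_mem (hp _ hsum) (p.smul_mem a hsum) using 1
      rw [map_sum, Finset.smul_sum, ← Finset.sum_sub_distrib, Finset.sum_insert ha,
        Module.End.mem_eigenspace_iff.1 (hx a (Finset.mem_insert_self a s)), sub_self, zero_add]
      exact Finset.sum_congr rfl fun μ hμ => by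
        rw [Module.End.mem_eigenspace_iff.1 (hx' μ hμ), sub_smul]
    have hrest : ∀ μ ∈ s, x μ ∈ p := fun μ hμ => by
      have := p.smul_mem (μ - a)⁻¹
        (ih (fun ν hν => (f.eigenspace ν).smul_mem _ (hx' ν hν)) hfa μ hμ)
      rwa [smul_smul, inv_mul_cancel₀ (sub_ne_zero.2 (ne_of_mem_of_not_mem hμ ha)),
        one_smul] at this
    intro μ hμ
    rcases Finset.mem_insert.1 hμ with rfl | hμ
    · rw [Finset.sum_insert ha] at hsum
      simpa using p.sub_mem hsum (p.sum_mem hrest)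
    · exact hrest μ hμ

namespace VAx.VAData.IsDiag

variable {V : Type*} [AddCommGroup V] [Module ℂ V] {f g : Module.End ℂ V}

theorem smul (c : ℂ) (hf : IsDiag f) : IsDiag (c • f) := by
  refine eq_top_iff.2 (hf ▸ iSup_le fun μ x hx => Submodule.mem_iSup_of_mem (c * μ) ?_)
  rw [Module.End.mem_eigenspace_iff] at hx ⊢
  rw [LinearMap.smul_apply, hx, smul_smul]

theorem add_of_commute (hc : Commute f g) (hf : IsDiag f) (hg : IsDiag g) : IsDiag (f + g) := by
  refine eq_top_iff.2 (hg ▸ iSup_le fun ν x hx => ?_)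
  obtain ⟨y, hy, rfl⟩ := (Submodule.mem_iSup_iff_exists_finsupp _ _).1
    (hf ▸ Submodule.mem_top : x ∈ ⨆ μ, f.eigenspace μ)
  have hfg : ∀ z ∈ g.eigenspace ν, f z ∈ g.eigenspace ν := fun z hz =>
    Module.End.mapsTo_genEigenspace_of_comm hc.symm ν 1 hz
  have hyg := Submodule.mem_of_sum_mem_of_mem_eigenspace hfg y.support (fun μ _ => hy μ) hx
  refine Submodule.sum_mem _ fun μ hμ => Submodule.mem_iSup_of_mem (μ + ν) ?_
  rw [Module.End.mem_eigenspace_iff, LinearMap.add_apply,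
    Module.End.mem_eigenspace_iff.1 (hy μ), Module.End.mem_eigenspace_iff.1 (hyg μ hμ), add_smul]

end VAx.VAData.IsDiag

namespace VAx

section LamPoly

variable {W : Type*}

/-- `lamPoly [x₀, …, xₙ]` is the `λ`-expansion `x₀ + x₁λ + ⋯ + xₙλⁿ`. -/
def lamPoly [Zero W] (l : List W) : ℕ → W := fun m => l.getD m 0

@[simp] theorem lamPoly_nil [Zero W] (m : ℕ) : lamPoly ([] : List W) m = 0 := rfl

@[simp] theorem lamPoly_cons_zero [Zero W] (x : W) (l : List W) : lamPoly (x :: l) 0 = x := rfl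

@[simp] theorem lamPoly_cons_succ [Zero W] (x : W) (l : List W) (m : ℕ) :
    lamPoly (x :: l) (m + 1) = lamPoly l m := rfl

theorem lamPoly_append_zero [Zero W] (l : List W) : lamPoly (l ++ [0]) = lamPoly l := by
  funext m
  induction l generalizing m with
  | nil => cases m <;> rfl
  | cons x l ih => cases m <;> simp [ih]

@[simp] theorem lam_zero [AddCommGroup W] (f : ℕ → W) : lam f 0 = 0 := rfl

@[simp] theorem lam_succ [AddCommGroup W] (f : ℕ → W) (m : ℕ) : lam f (m + 1) = f m := rfl

end LamPoly

variable {V : Type*} [AddCommGroup V] [Module ℂ V]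

namespace LCAData.IsLCA

variable {S : LCAData V} {p q : Bool} {a b : V}

theorem B_der_left (hS : S.IsLCA) (m : ℕ) :
    S.B (S.der a) b m = -lam (S.B a b) m := by
  cases m with
  | zero => simp [(hS.sesq1 a b).1]
  | succ m => simp [(hS.sesq1 a b).2 m]

theorem B_der_right (hS : S.IsLCA) (m : ℕ) :
    S.B a (S.der b) m = S.der (S.B a b m) + lam (S.B a b) m := by
  cases m with
  | zero => simp [(hS.sesq2 a b).1]
  | succ m => simp [(hS.sesq2 a b).2 m]

theorem B_B_zero (hS : S.IsLCA) (ha : a ∈ S.part p) (hb : b ∈ S.part q) (c : V) (m : ℕ) :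
    S.B a (S.B b c 0) m =
      ∑ j ∈ Finset.range (m + 1), S.B (S.B a b j) c (m - j) + sgn p q • S.B b (S.B a c m) 0 := by
  simpa [JacEq] using hS.jacobi p q a b c ha hb m 0

theorem B_zero_B (hS : S.IsLCA) (ha : a ∈ S.part p) (hb : b ∈ S.part q) (c : V) (n : ℕ) :
    S.B a (S.B b c n) 0 = S.B (S.B a b 0) c n + sgn p q • S.B b (S.B a c 0) n := by
  simpa [JacEq] using hS.jacobi p q a b c ha hb 0 n

theorem B_swap_of_eq_lamPoly (hS : S.IsLCA) (ha : a ∈ S.part p) (hb : b ∈ S.part q)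
    {x₀ x₁ x₂ : V} (h : S.B a b = lamPoly [x₀, x₁, x₂]) :
    S.B b a = lamPoly [-sgn p q • (x₀ - S.der x₁ + S.der (S.der x₂)),
      -sgn p q • ((2 : ℂ) • S.der x₂ - x₁), -sgn p q • x₂] := by
  have hvan : ∀ m, 3 ≤ m → S.B a b m = 0 := fun m hm => by
    obtain ⟨k, rfl⟩ := Nat.exists_eq_add_of_le' hm
    simp [h]
  have hskew := hS.skew p q a b 3 ha hb hvan
  funext k
  rw [hskew k]
  rcases k with _ | _ | _ | k
  · simp [Finset.sum_Icc_succ_top, h, smul_add, sub_eq_add_neg, sq]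
  · simp [Finset.sum_Icc_succ_top, h, ofNat_smul_eq_nsmul, sub_eq_add_neg, add_comm]
  · simp [Finset.sum_Icc_succ_top, h]
  · rw [Finset.sum_eq_zero fun m hm => by
      rw [hvan m (le_add_self.trans (Finset.mem_Icc.1 hm).1), map_zero, smul_zero]]
    simp

theorem B_swap_eq_zero (hS : S.IsLCA) (ha : a ∈ S.part p) (hb : b ∈ S.part q)
    (h : S.B a b = 0) : S.B b a = 0 := by
  funext k
  simpa [h] using hS.skew p q a b 0 ha hb (fun m _ => by simp [h]) k

end LCAData.IsLCA

namespace VAData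

variable {S : VAData V} {G L u v : V} {c c₁ c₂ : ℂ}

theorem isSCV_iff (hL : (1 / 2 : ℂ) • S.B G G 0 = L) :
    S.IsSCV G c ↔ G ∈ S.part true ∧ S.B G G = lamPoly [(2 : ℂ) • L, 0, (c / 3) • S.one] ∧
      S.B L L = lamPoly [S.der L, (2 : ℂ) • L, 0, (c / 12) • S.one] ∧
      S.B L G = lamPoly [S.der G, (3 / 2 : ℂ) • G] ∧
      (∀ x, S.B L x 0 = S.der x) ∧ IsDiag (S.opAt L 1) := by
  have hGG : S.B G G = lamPoly [(2 : ℂ) • L, 0, (c / 3) • S.one] ↔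
      S.B G G 1 = 0 ∧ S.B G G 2 = (c / 3) • S.one ∧ ∀ m, 3 ≤ m → S.B G G m = 0 := by
    refine ⟨fun h => ⟨by simp [h], by simp [h], fun m hm => ?_⟩, fun ⟨h1, h2, h3⟩ => ?_⟩
    · obtain ⟨k, rfl⟩ := Nat.exists_eq_add_of_le' hm
      simp [h]
    · funext m
      rcases m with _ | _ | _ | m
      · simp [← hL, smul_smul]
      · exact h1
      · exact h2
      · exact h3 _ (by omega)
  subst hL
  constructor
  · rintro ⟨hG, h1, h2, h3, hLL, hLG, hL0, hdiag⟩
    refine ⟨hG, hGG.2 ⟨h1, h2, h3⟩, hLL.trans (funext fun m => ?_),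
      hLG.trans (funext fun m => ?_), hL0, hdiag⟩
    · rcases m with _ | _ | _ | _ | m <;> rfl
    · rcases m with _ | _ | m <;> rfl
  · rintro ⟨hG, hGG', hLL, hLG, hL0, hdiag⟩
    obtain ⟨h1, h2, h3⟩ := hGG.1 hGG'
    refine ⟨hG, h1, h2, h3, hLL.trans (funext fun m => ?_),
      hLG.trans (funext fun m => ?_), hL0, hdiag⟩
    · rcases m with _ | _ | _ | _ | m <;> rfl
    · rcases m with _ | _ | m <;> rfl

theorem B_v_G (hS : S.IsVA) (hG : G ∈ S.part true) (hv : v ∈ S.part true)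
    (hGv : S.B G v = lamPoly [u, c₁ • S.one]) :
    S.B v G = lamPoly [u, -(c₁ • S.one)] := by
  rw [hS.isLCA.B_swap_of_eq_lamPoly hG hv (hGv.trans (lamPoly_append_zero _).symm)]
  funext m
  rcases m with _ | _ | _ | m <;> simp [sgn, hS.der_one]

theorem B_add_der_self (hS : S.IsVA) (hG : G ∈ S.part true) (hv : v ∈ S.part true)
    (hGG : S.B G G = lamPoly [(2 : ℂ) • L, 0, (c / 3) • S.one])
    (hGv : S.B G v = lamPoly [u, c₁ • S.one]) (hvv : S.B v v = lamPoly [c₂ • S.one]) :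
    S.B (G + S.der v) (G + S.der v) =
      lamPoly [(2 : ℂ) • (L + (1 / 2 : ℂ) • S.der u), 0, ((c + 6 * c₁ - 3 * c₂) / 3) • S.one] := by
  have hvG := B_v_G hS hG hv hGv
  funext m
  simp only [map_add, LinearMap.add_apply, Pi.add_apply, hS.isLCA.B_der_left,
    hS.isLCA.B_der_right]
  rcases m with _ | _ | _ | m <;> simp [hGG, hGv, hvG, hvv, hS.der_one, hS.isLCA.B_der_right]
  module

theorem B_G_u (hS : S.IsVA) (hG : G ∈ S.part true)
    (hGG : S.B G G = lamPoly [(2 : ℂ) • L, 0, (c / 3) • S.one])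
    (hLv : S.B L v = lamPoly [S.der v, (1 / 2 : ℂ) • v])
    (hGv : S.B G v = lamPoly [u, c₁ • S.one]) :
    S.B G u = lamPoly [S.der v, v] := by
  funext m
  have hJ := hS.isLCA.B_B_zero hG hG v m
  rw [show S.B G v 0 = u by simp [hGv]] at hJ
  rcases m with _ | _ | m
  · simp [hGG, hLv, hGv, sgn] at hJ ⊢
    linear_combination (norm := module) (1 / 2 : ℂ) • hJ
  · simpa [Finset.sum_range_succ, hGG, hLv, hGv, sgn, hS.B_one_right] using hJ
  · simpa [Finset.sum_range_succ', hGG, hLv, hGv, sgn, hS.B_one_left] using hJ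

theorem B_u_G (hS : S.toLCAData.IsLCA) (hG : G ∈ S.part true) (hu : u ∈ S.part false)
    (hGu : S.B G u = lamPoly [S.der v, v]) :
    S.B u G = lamPoly [0, v] := by
  rw [hS.B_swap_of_eq_lamPoly hG hu (hGu.trans (lamPoly_append_zero _).symm)]
  funext m
  rcases m with _ | _ | _ | m <;> simp [sgn]

theorem B_L_u (hS : S.toLCAData.IsLCA) (hL : L ∈ S.part false) (hG : G ∈ S.part true)
    (hLG : S.B L G = lamPoly [S.der G, (3 / 2 : ℂ) • G])
    (hLv : S.B L v = lamPoly [S.der v, (1 / 2 : ℂ) • v])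
    (hGv : S.B G v = lamPoly [u, c₁ • S.one]) :
    S.B L u = lamPoly [S.der u, u, (c₁ / 2) • S.one] := by
  funext m
  have hJ := hS.B_B_zero hL hG v m
  rw [show S.B G v 0 = u by simp [hGv]] at hJ
  rcases m with _ | _ | _ | m
  · simpa [hLG, hLv, hGv, sgn, hS.B_der_left, hS.B_der_right] using hJ
  · simp [Finset.sum_range_succ, hLG, hLv, hGv, sgn, hS.B_der_left] at hJ ⊢
    linear_combination (norm := module) hJ
  · simp [Finset.sum_range_succ, hLG, hLv, hGv, sgn, hS.B_der_left] at hJ ⊢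
    linear_combination (norm := module) hJ
  · simp [Finset.sum_range_succ', hLG, hLv, hGv, sgn, hS.B_der_left] at hJ ⊢
    linear_combination (norm := module) hJ

theorem B_u_v (hS : S.IsVA) (hG : G ∈ S.part true) (hv : v ∈ S.part true)
    (hu : u ∈ S.part false) (hGv : S.B G v = lamPoly [u, c₁ • S.one])
    (hvv : S.B v v = lamPoly [c₂ • S.one]) :
    S.B u v = 0 := by
  have hvG := B_v_G hS hG hv hGv
  have hJ : ∀ n, S.B v (S.B G v n) 0 = S.B u v n := fun n => by
    simpa [hvG, hvv, sgn, hS.B_one_right] using hS.isLCA.B_zero_B hv hG v n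
  have hsucc : ∀ n, S.B u v (n + 1) = 0 := fun n => by
    rw [← hJ]
    rcases n with _ | n <;> simp [hGv, hS.B_one_right]
  have hswap := hS.isLCA.B_swap_of_eq_lamPoly hu hv (x₀ := S.B u v 0) (x₁ := 0) (x₂ := 0)
    (funext fun m => by rcases m with _ | _ | _ | m <;> simp [hsucc])
  have h0 : -S.B u v 0 = S.B u v 0 := by simpa [hGv, hswap, sgn] using hJ 0
  funext m
  rcases m with _ | m
  · show S.B u v 0 = 0
    linear_combination (norm := module) (-(1 / 2) : ℂ) • h0
  · exact hsucc m

theorem B_u_u (hS : S.IsVA) (hG : G ∈ S.part true) (hv : v ∈ S.part true)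
    (hu : u ∈ S.part false) (hGv0 : S.B G v 0 = u) (hvv : S.B v v = lamPoly [c₂ • S.one])
    (hGu0 : S.B G u 0 = S.der v) (huv : S.B u v = 0) :
    S.B u u = lamPoly [0, c₂ • S.one] := by
  funext n
  have hJ := hS.isLCA.B_zero_B hG hv u n
  rw [hS.isLCA.B_swap_eq_zero hu hv huv, hGu0, hGv0] at hJ
  rcases n with _ | _ | n <;> simp [hS.isLCA.B_der_right, hvv, sgn, hS.der_one] at hJ ⊢ <;>
    linear_combination (norm := module) -hJ

theorem B_add_half_der_self (hS : S.IsVA) (hL : L ∈ S.part false) (hu : u ∈ S.part false)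
    (hLL : S.B L L = lamPoly [S.der L, (2 : ℂ) • L, 0, (c / 12) • S.one])
    (hLu : S.B L u = lamPoly [S.der u, u, (c₁ / 2) • S.one])
    (huu : S.B u u = lamPoly [0, c₂ • S.one]) :
    S.B (L + (1 / 2 : ℂ) • S.der u) (L + (1 / 2 : ℂ) • S.der u) =
      lamPoly [S.der (L + (1 / 2 : ℂ) • S.der u), (2 : ℂ) • (L + (1 / 2 : ℂ) • S.der u), 0,
        ((c + 6 * c₁ - 3 * c₂) / 12) • S.one] := by
  have huL := hS.isLCA.B_swap_of_eq_lamPoly hL hu hLu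
  funext m
  simp only [map_add, map_smul, LinearMap.add_apply, LinearMap.smul_apply, Pi.add_apply,
    Pi.smul_apply, hS.isLCA.B_der_left, hS.isLCA.B_der_right]
  rcases m with _ | _ | _ | _ | m <;>
    simp [hLL, hLu, huL, huu, sgn, hS.der_one, hS.isLCA.B_der_right] <;> module

theorem B_add_half_der_add_der (hS : S.toLCAData.IsLCA)
    (hLG : S.B L G = lamPoly [S.der G, (3 / 2 : ℂ) • G])
    (hLv : S.B L v = lamPoly [S.der v, (1 / 2 : ℂ) • v])
    (huG : S.B u G = lamPoly [0, v]) (huv : S.B u v = 0) :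
    S.B (L + (1 / 2 : ℂ) • S.der u) (G + S.der v) =
      lamPoly [S.der (G + S.der v), (3 / 2 : ℂ) • (G + S.der v)] := by
  funext m
  simp only [map_add, map_smul, LinearMap.add_apply, LinearMap.smul_apply, Pi.add_apply,
    Pi.smul_apply, hS.B_der_left, hS.B_der_right]
  rcases m with _ | _ | _ | m <;> simp [hLG, hLv, huG, huv, hS.B_der_right]
  module

theorem opAt_add_half_der_one (hS : S.toLCAData.IsLCA) :
    S.opAt (L + (1 / 2 : ℂ) • S.der u) 1 = S.opAt L 1 - (1 / 2 : ℂ) • S.opAt u 0 := by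
  ext x
  simp [opAt, hS.B_der_left, sub_eq_add_neg]

theorem commute_opAt_one_opAt_zero (hS : S.toLCAData.IsLCA) (hL : L ∈ S.part false)
    (hu : u ∈ S.part false) (hLu0 : S.B L u 0 = S.der u) (hLu1 : S.B L u 1 = u) :
    Commute (S.opAt L 1) (S.opAt u 0) := by
  ext x
  have hJ := hS.B_B_zero hL hu x 1
  simpa [Finset.sum_range_succ, hLu0, hLu1, hS.B_der_left, sgn, opAt] using hJ

end VAData

end VAx

/-- (Shift of a superconformal vector.) Let `V` be an `N = 1` superconformal
vertex algebra with superconformal vector `G`, conformal vector `L = (1/2)G_{(0)}G` of central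
charge `c`, and an odd vector `v` satisfying `[L_λ v] = (∂+λ/2)v`, `[G_λ v] = G_{(0)}v + c₁λ`,
`[v_λ v] = c₂`, with `(G_{(0)}v)_{(0)}` diagonalizable. Then `G + ∂v` is also a superconformal
vector of `V`, with corresponding conformal vector `L + (1/2)∂(G_{(0)}v)` of central charge
`c + 6c₁ - 3c₂`. -/
theorem stmt_3 {V : Type*} [AddCommGroup V] [Module ℂ V]
    (S : VAx.VAData V) (hS : S.IsVA) (G L v : V) (c c₁ c₂ : ℂ)
    (hGsc : S.IsSCV G c) (hLdef : L = (1 / 2 : ℂ) • S.B G G 0)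
    (hv : v ∈ S.part true)
    (hLv : S.B L v = fun m => match m with
      | 0 => S.der v
      | 1 => (1 / 2 : ℂ) • v
      | _ => 0)
    (hGv1 : S.B G v 1 = c₁ • S.one) (hGv2 : ∀ m, 2 ≤ m → S.B G v m = 0)
    (hvv : S.B v v = fun m => if m = 0 then c₂ • S.one else 0)
    (hdiag : IsDiag (S.opAt (S.B G v 0) 0)) :
    S.IsSCV (G + S.der v) (c + 6 * c₁ - 3 * c₂) ∧
    (1 / 2 : ℂ) • S.B (G + S.der v) (G + S.der v) 0
      = L + (1 / 2 : ℂ) • S.der (S.B G v 0) := by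
  obtain ⟨hG, hGG, hLL, hLG, hL0, hLdiag⟩ := (isSCV_iff hLdef.symm).1 hGsc
  set u := S.B G v 0
  have hL : L ∈ S.part false := hLdef ▸ (S.part false).smul_mem _ (hS.isLCA.hom_B _ _ _ _ hG hG 0)
  have hu : u ∈ S.part false := hS.isLCA.hom_B _ _ _ _ hG hv 0
  have hGv : S.B G v = lamPoly [u, c₁ • S.one] := funext fun m => by
    rcases m with _ | _ | m
    exacts [rfl, hGv1, hGv2 _ (by omega)]
  replace hLv : S.B L v = lamPoly [S.der v, (1 / 2 : ℂ) • v] :=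
    hLv.trans (funext fun m => by rcases m with _ | _ | m <;> rfl)
  replace hvv : S.B v v = lamPoly [c₂ • S.one] :=
    hvv.trans (funext fun m => by rcases m with _ | m <;> rfl)
  have hGu := B_G_u hS hG hGG hLv hGv
  have hLu := B_L_u hS.isLCA hL hG hLG hLv hGv
  have huv := B_u_v hS hG hv hu hGv hvv
  have hG'G' := B_add_der_self hS hG hv hGG hGv hvv
  have hL' : (1 / 2 : ℂ) • S.B (G + S.der v) (G + S.der v) 0 = L + (1 / 2 : ℂ) • S.der u := by
    rw [hG'G', lamPoly_cons_zero, smul_smul]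
    norm_num
  refine ⟨(isSCV_iff hL').2 ⟨(S.part true).add_mem hG (hS.isLCA.hom_der _ _ hv), hG'G',
    B_add_half_der_self hS hL hu hLL hLu (B_u_u hS hG hv hu rfl hvv (by simp [hGu]) huv),
    B_add_half_der_add_der hS.isLCA hLG hLv (B_u_G hS.isLCA hG hu hGu) huv,
    fun x => by simp [hL0, hS.isLCA.B_der_left], ?_⟩, hL'⟩
  rw [opAt_add_half_der_one hS.isLCA, sub_eq_add_neg, ← neg_smul]
  exact hLdiag.add_of_commute
    ((commute_opAt_one_opAt_zero hS.isLCA hL hu (by simp [hLu]) (by simp [hLu])).smul_right _)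
    (hdiag.smul _)
end
end

section
/- Let R = ℂ[∂]⊗span{u_i}_{i∈I} ⊕ E_C be a Lie conformal algebra with central part E_C (∂E_C = 0). Let R̄ be the parity-reversed ℂ[∂]-module with generators ū_i and central part Ē_C, and define on R̃ = R ⊕ R̄ the λ-brackets [ū_i _λ u_j] := overline([u_i _λ u_j]), [u_i _λ ū_j] := (-1)^{p(u_i)} overline([u_i _λ u_j]), [ū_i _λ ū_j] := 0, and [C _λ R̃] = [C̄ _λ R̃] = 0. Then R̃ is a Lie conformal algebra (i.e. the λ-bracket satisfies sesquilinearity, skew-symmetry, and the Jacobi identity). -/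
open scoped BigOperators
noncomputable section

open VAx VAx.LCAData

variable {V : Type*} [AddCommGroup V] [Module ℂ V]

/-- The Lie conformal algebra `R̃ = R ⊕ R̄` of Theorem 5.4: the underlying space is `R × R`
(second factor the parity-reversed copy `R̄`, `x̄ := (0,x)`), with
`[ū_λ u] = overline([u'_λ u])`, `[u_λ ū] = (-1)^{p(u)} overline([u_λ u'])`, `[ū_λ ū'] = 0`.
Here `σ` is the parity involution of `R` (`σ = id` on the even part, `σ = -id` on the odd
part), which implements the sign `(-1)^{p(u)}`. -/
def barProd (S : VAx.LCAData V) (σ : V →ₗ[ℂ] V) : VAx.LCAData (V × V) where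
  part := fun p => (S.part p).prod (S.part (!p))
  der := S.der.prodMap S.der
  B := LinearMap.mk₂ ℂ
    (fun x y => fun m => (S.B x.1 y.1 m, S.B x.2 y.1 m + S.B (σ x.1) y.2 m))
    (by
      intro a b y; funext m
      simp [map_add, LinearMap.add_apply, Pi.add_apply, Prod.ext_iff]
      abel)
    (by
      intro c a y; funext m
      simp [map_smul, LinearMap.smul_apply, Pi.smul_apply, Prod.ext_iff, smul_add])
    (by
      intro a y z; funext m
      simp [map_add, LinearMap.add_apply, Pi.add_apply, Prod.ext_iff]
      abel)
    (by
      intro c a y; funext m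
      simp [map_smul, LinearMap.smul_apply, Pi.smul_apply, Prod.ext_iff, smul_add])

/-!
An element of `R̃ = R ⊕ R̄` is a pair `(a, b)` standing for `a + b̄`. The `R`-component of the
bracket is the bracket of `R`, and the `R̄`-component of `[x_λ y]` is
`[x₂_λ y₁] + (-1)^{p(x₁)} [x₁_λ y₂]`. Each axiom of `R̃` therefore reduces, componentwise, to
the same axiom of `R` for at most three pairs of homogeneous elements; e.g. for `x, y` of
parities `p, q` the `R̄`-component of the Jacobi identity is
`J(x₂, y₁, z₁) + (-1)^p J(x₁, y₂, z₁) + (-1)^{p+q} J(x₁, y₁, z₂)`, the signs matching because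
`(-1)^{2p} = 1`. Sesquilinearity needs `σ ∂ = ∂ σ`, which holds as `∂` is even and `R` is the
sum of its even and odd parts.
-/

lemma psgn_mul_self (p : Bool) : psgn p * psgn p = 1 := by
  cases p <;> norm_num [psgn]

lemma psgn_xor (p q : Bool) : psgn (xor p q) = psgn p * psgn q := by
  cases p <;> cases q <;> norm_num [psgn]

lemma sgn_not_left (p q : Bool) : sgn (!p) q = sgn p q * psgn q := by
  cases p <;> cases q <;> norm_num [sgn, psgn]

lemma sgn_not_right (p q : Bool) : sgn p (!q) = sgn p q * psgn p := by
  cases p <;> cases q <;> norm_num [sgn, psgn]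

/-- The sum in the skew-symmetry axiom: the coefficient of `λ^k` in `f(-∂-λ)` for
`f(λ) = ∑_{m ≤ N} λ^m • f m`. -/
def skewSum (d : Module.End ℂ V) (f : ℕ → V) (k N : ℕ) : V :=
  ∑ m ∈ Finset.Icc k N, ((-1 : ℂ) ^ m * (m.choose k : ℂ)) • (d ^ (m - k)) (f m)

lemma skewSum_add (d : Module.End ℂ V) (f g : ℕ → V) (k N : ℕ) :
    skewSum d (f + g) k N = skewSum d f k N + skewSum d g k N := by
  simp only [skewSum, Pi.add_apply, map_add, smul_add, Finset.sum_add_distrib]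

lemma skewSum_smul (d : Module.End ℂ V) (c : ℂ) (f : ℕ → V) (k N : ℕ) :
    skewSum d (c • f) k N = c • skewSum d f k N := by
  simp only [skewSum, Pi.smul_apply, map_smul, Finset.smul_sum, smul_comm c]

lemma skewSum_eq_of_le {d : Module.End ℂ V} {f : ℕ → V} {N N' : ℕ}
    (hf : ∀ m, N ≤ m → f m = 0) (hN : N ≤ N') (k : ℕ) :
    skewSum d f k N' = skewSum d f k N := by
  refine (Finset.sum_subset (Finset.Icc_subset_Icc_right hN) fun m hm hmN => ?_).symm
  rw [hf m (by grind), map_zero, smul_zero]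

lemma prodMap_pow_apply {R M₁ M₂ : Type*} [Semiring R] [AddCommMonoid M₁] [Module R M₁]
    [AddCommMonoid M₂] [Module R M₂] (f : Module.End R M₁) (g : Module.End R M₂) (n : ℕ)
    (x : M₁ × M₂) : (f.prodMap g ^ n) x = ((f ^ n) x.1, (g ^ n) x.2) := by
  induction n generalizing x with
  | zero => rfl
  | succ n ih => simp only [pow_succ, Module.End.mul_apply, LinearMap.prodMap_apply, ih]

lemma skewSum_prodMap (d : Module.End ℂ V) (F : ℕ → V × V) (k N : ℕ) :
    skewSum (d.prodMap d) F k N =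
      (skewSum d (fun m => (F m).1) k N, skewSum d (fun m => (F m).2) k N) := by
  simp only [skewSum, prodMap_pow_apply, Prod.ext_iff, Prod.fst_sum, Prod.snd_sum,
    Prod.smul_fst, Prod.smul_snd, and_self]

namespace VAx.LCAData

variable {S : LCAData V}

lemma skewEq_iff (p q : Bool) (a b : V) (N : ℕ) :
    S.SkewEq p q a b N ↔ ∀ k, S.B b a k = (-sgn p q) • skewSum S.der (S.B a b) k N :=
  Iff.rfl

lemma apply_der_eq_der_apply (hS : S.IsLCA) (hspan : S.part false ⊔ S.part true = ⊤)
    {σ : Module.End ℂ V} (hσ : ∀ p, ∀ a ∈ S.part p, σ a = psgn p • a) (x : V) :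
    σ (S.der x) = S.der (σ x) := by
  have hx : x ∈ S.part false ⊔ S.part true := hspan ▸ Submodule.mem_top
  obtain ⟨e, he, o, ho, rfl⟩ := Submodule.mem_sup.mp hx
  simp only [map_add, hσ _ _ he, hσ _ _ ho, hσ _ _ (hS.hom_der _ _ he),
    hσ _ _ (hS.hom_der _ _ ho), map_smul]

end VAx.LCAData

section barProd

variable {S : LCAData V} {σ : Module.End ℂ V}

@[simp]
lemma barProd_B_apply (x y : V × V) (m : ℕ) :
    (barProd S σ).B x y m = (S.B x.1 y.1 m, S.B x.2 y.1 m + S.B (σ x.1) y.2 m) := rfl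

@[simp]
lemma barProd_der_apply (x : V × V) : (barProd S σ).der x = (S.der x.1, S.der x.2) := rfl

lemma barProd_der : (barProd S σ).der = S.der.prodMap S.der := rfl

variable (hS : S.IsLCA) (hσ : ∀ p, ∀ a ∈ S.part p, σ a = psgn p • a)
include hS

lemma barProd_hom_der (p : Bool) (x : V × V) (hx : x ∈ (barProd S σ).part p) :
    (barProd S σ).der x ∈ (barProd S σ).part p :=
  ⟨hS.hom_der _ _ hx.1, hS.hom_der _ _ hx.2⟩

lemma barProd_sesq1 (hσder : ∀ x, σ (S.der x) = S.der (σ x)) (x y : V × V) :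
    (barProd S σ).B ((barProd S σ).der x) y 0 = 0 ∧
      ∀ m, (barProd S σ).B ((barProd S σ).der x) y (m + 1) = -(barProd S σ).B x y m := by
  simp only [barProd_B_apply, barProd_der_apply, hσder, (hS.sesq1 _ _).1, (hS.sesq1 _ _).2,
    add_zero, Prod.mk_zero_zero, Prod.neg_mk, neg_add, implies_true, and_self]

lemma barProd_sesq2 (x y : V × V) :
    (barProd S σ).B x ((barProd S σ).der y) 0 = (barProd S σ).der ((barProd S σ).B x y 0) ∧
      ∀ m, (barProd S σ).B x ((barProd S σ).der y) (m + 1) =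
        (barProd S σ).der ((barProd S σ).B x y (m + 1)) + (barProd S σ).B x y m := by
  simp only [barProd_B_apply, barProd_der_apply, (hS.sesq2 _ _).1, (hS.sesq2 _ _).2, map_add,
    Prod.mk_add_mk, true_and]
  intro m
  congr 1
  abel

lemma barProd_bfin (x y : V × V) : ∃ N, ∀ m, N ≤ m → (barProd S σ).B x y m = 0 := by
  obtain ⟨N₁, h₁⟩ := hS.bfin x.1 y.1
  obtain ⟨N₂, h₂⟩ := hS.bfin x.2 y.1
  obtain ⟨N₃, h₃⟩ := hS.bfin (σ x.1) y.2
  refine ⟨max N₁ (max N₂ N₃), fun m hm => ?_⟩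
  simp only [max_le_iff] at hm
  simp [h₁ m hm.1, h₂ m hm.2.1, h₃ m hm.2.2]

include hσ

lemma barProd_hom_B (p q : Bool) (x y : V × V) (hx : x ∈ (barProd S σ).part p)
    (hy : y ∈ (barProd S σ).part q) (m : ℕ) :
    (barProd S σ).B x y m ∈ (barProd S σ).part (xor p q) := by
  refine ⟨hS.hom_B p q _ _ hx.1 hy.1 m, add_mem ?_ ?_⟩
  · simpa using hS.hom_B _ _ _ _ hx.2 hy.1 m
  · rw [hσ p _ hx.1, map_smul]
    simpa using Submodule.smul_mem _ (psgn p) (hS.hom_B _ _ _ _ hx.1 hy.2 m)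

lemma barProd_skew (p q : Bool) (x y : V × V) (N : ℕ) (hx : x ∈ (barProd S σ).part p)
    (hy : y ∈ (barProd S σ).part q) (hN : ∀ m, N ≤ m → (barProd S σ).B x y m = 0) :
    (barProd S σ).SkewEq p q x y N := by
  have hbar : ∀ m, ((barProd S σ).B x y m).2 = (S.B x.2 y.1 + psgn p • S.B x.1 y.2) m := by
    simp [hσ p _ hx.1]
  -- `N` only bounds the sum of the two brackets in the `R̄`-component, not each of them
  obtain ⟨N', hNN', h₁₂, h₂₁⟩ : ∃ N', N ≤ N' ∧ (∀ m, N' ≤ m → S.B x.1 y.2 m = 0) ∧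
      ∀ m, N' ≤ m → S.B x.2 y.1 m = 0 := by
    obtain ⟨N₁, h₁⟩ := hS.bfin x.1 y.2
    obtain ⟨N₂, h₂⟩ := hS.bfin x.2 y.1
    exact ⟨max N (max N₁ N₂), by omega, fun m hm => h₁ m (by omega),
      fun m hm => h₂ m (by omega)⟩
  rw [skewEq_iff, barProd_der]
  intro k
  rw [skewSum_prodMap]
  ext
  · exact hS.skew p q _ _ N hx.1 hy.1 (fun m hm => congrArg Prod.fst (hN m hm)) k
  · simp only [hbar, Prod.smul_snd]
    simp only [barProd_B_apply, hσ q _ hy.1, map_smul, LinearMap.smul_apply, Pi.smul_apply]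
    rw [← skewSum_eq_of_le (fun m hm => (hbar m).symm.trans (congrArg Prod.snd (hN m hm))) hNN',
      skewSum_add, skewSum_smul, (skewEq_iff ..).1 (hS.skew p (!q) _ _ N' hx.1 hy.2 h₁₂),
      (skewEq_iff ..).1 (hS.skew (!p) q _ _ N' hx.2 hy.1 h₂₁), sgn_not_left, sgn_not_right]
    linear_combination (norm := module) psgn_mul_self q •
      (-sgn p q • skewSum S.der (S.B x.2 y.1) k N')

lemma barProd_jacobi (p q : Bool) (x y z : V × V) (hx : x ∈ (barProd S σ).part p)
    (hy : y ∈ (barProd S σ).part q) (m n : ℕ) : (barProd S σ).JacEq p q x y z m n := by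
  have hσB : ∀ j, σ (S.B x.1 y.1 j) = psgn (xor p q) • S.B x.1 y.1 j :=
    fun j => hσ _ _ (hS.hom_B p q _ _ hx.1 hy.1 j)
  have J₀ := hS.jacobi p q x.1 y.1 z.1 hx.1 hy.1 m n
  have J₁ := hS.jacobi (!p) q x.2 y.1 z.1 hx.2 hy.1 m n
  have J₂ := hS.jacobi p (!q) x.1 y.2 z.1 hx.1 hy.2 m n
  have J₃ := hS.jacobi p q x.1 y.1 z.2 hx.1 hy.1 m n
  unfold JacEq at *
  ext
  · simpa only [barProd_B_apply, Prod.fst_add, Prod.smul_fst, Prod.fst_sum] using J₀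
  · simp only [barProd_B_apply, Prod.snd_add, Prod.smul_snd, Prod.snd_sum, hσ p _ hx.1,
      hσ q _ hy.1, hσB, map_add, map_smul, LinearMap.add_apply, LinearMap.smul_apply,
      Pi.add_apply, Pi.smul_apply]
    rw [J₁, J₂, J₃, sgn_not_left, sgn_not_right, psgn_xor]
    simp only [smul_add, Finset.sum_add_distrib, smul_smul]
    simp only [mul_comm (Nat.cast _ : ℂ), mul_smul, ← Finset.smul_sum]
    linear_combination (norm := module) psgn_mul_self p • (sgn p q • S.B y.2 (S.B x.1 z.1 m) n)

end barProd

theorem stmt_6_general (S : VAx.LCAData V) (hS : S.IsLCA)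
    (σ : V →ₗ[ℂ] V)
    (hσe : ∀ a ∈ S.part false, σ a = a) (hσo : ∀ a ∈ S.part true, σ a = -a)
    (hspan : S.part false ⊔ S.part true = ⊤) :
    (barProd S σ).IsLCA := by
  have hσ : ∀ p, ∀ a ∈ S.part p, σ a = psgn p • a := by
    rintro (_ | _) a ha <;> simp [psgn, hσe, hσo, ha]
  exact
    { hom_der := barProd_hom_der hS
      hom_B := barProd_hom_B hS hσ
      sesq1 := barProd_sesq1 hS (apply_der_eq_der_apply hS hspan hσ)
      sesq2 := barProd_sesq2 hS
      bfin := barProd_bfin hS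
      skew := barProd_skew hS hσ
      jacobi := barProd_jacobi hS hσ }

/-- Let `R = ℂ[∂]⊗span{u_i} ⊕ E_C` be a Lie conformal algebra with central part
`E_C` (`∂E_C = 0`, `[E_C _λ R] = 0`). Then `R̃ = R ⊕ R̄` with the λ-brackets
`[ū_λ u] = overline([u'_λ u])`, `[u_λ ū] = (-1)^{p(u)} overline([u_λ u'])`, `[ū_λ ū'] = 0`
(and `[C_λ R̃] = [C̄_λ R̃] = 0`) is again a Lie conformal algebra: the bracket satisfies
sesquilinearity, skew-symmetry and the Jacobi identity. -/
theorem stmt_6 (S : VAx.LCAData V) (hS : S.IsLCA)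
    (σ : V →ₗ[ℂ] V)
    (hσe : ∀ a ∈ S.part false, σ a = a) (hσo : ∀ a ∈ S.part true, σ a = -a)
    (hspan : S.part false ⊔ S.part true = ⊤)
    (Z : Submodule ℂ V)
    (hZ : ∀ z ∈ Z, S.der z = 0 ∧ ∀ x m, S.B z x m = 0 ∧ S.B x z m = 0) :
    (barProd S σ).IsLCA :=
  stmt_6_general S hS σ hσe hσo hspan
end
end

section
/- Let SVir ⊕ Cur(g)_{N=1} be the ℂ[∂]-module where SVir = ℂ[∂]⊗(ℂL⊕ℂG)⊕ℂC carries the N=1 super-Virasoro λ-brackets and Cur(g)_{N=1} = ℂ[∂]⊗(g⊕ḡ) carries [a_λ b] = [a,b], [a_λ b̄] = (-1)^{p(a)} overline([a,b]), [ā_λ b̄] = 0, with cross brackets [L_λ a] = (∂+Δ_a λ)a, [L_λ ā] = (∂+(Δ_a - 1/2)λ)ā, [G_λ a] = (∂+(2Δ_a - 1)λ)ā, [G_λ ā] = a, where Δ_a = 1-ω for a ∈ g_ω in an Ω-graded Lie superalgebra g. Then this is a Lie conformal algebra; in particular the Jacobi identity [G_λ [a_γ b]] = [[G_λ a]_{λ+γ}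 b] + (-1)^{p(a)}[a_γ [G_λ b]] holds. -/
/-!
Everything reduces to sesquilinearity. Since `[a_γ b] = [a,b]` does not depend on `γ`,
`[∂ā_μ b] = -μ [ā_μ b] = -μ \overline{[a,b]}` and
`[a_γ ∂b̄] = (∂ + γ)[a_γ b̄] = (-1)^{p(a)} (∂ + γ) \overline{[a,b]}`. Hence both
`[[G_λ a]_{λ+γ} b]` and `(-1)^{p(a)}[a_γ [G_λ b]]` are multiples of `\overline{[a,b]}` and its
derivative, and their sum is `(∂ + (2Δ_a + 2Δ_b - 3)λ) \overline{[a,b]} = [G_λ [a,b]]`, because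
`Δ_{[a,b]} = Δ_a + Δ_b - 1`.
-/

open scoped BigOperators
noncomputable section

open VAx VAx.LCAData

namespace VAx.LCAData

variable {V : Type*} [AddCommGroup V] [Module ℂ V] (S : LCAData V)

/-- The `λ`-expansion of `x + λ y`. -/
def linExp (x y : V) : ℕ → V
  | 0 => x
  | 1 => y
  | _ => 0

theorem B_der_left_of_const {x y z : V}
    (hsq : S.B (S.der x) y 0 = 0 ∧ ∀ m, S.B (S.der x) y (m + 1) = - S.B x y m)
    (h : S.B x y = fun m => if m = 0 then z else 0) (k : ℕ) :
    S.B (S.der x) y k = if k = 1 then -z else 0 := by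
  rcases k with _ | k
  · simpa using hsq.1
  · rw [hsq.2, h]
    rcases k with _ | k <;> simp

theorem B_der_right_of_const {x y z : V}
    (hsq : S.B x (S.der y) 0 = S.der (S.B x y 0) ∧
      ∀ m, S.B x (S.der y) (m + 1) = S.der (S.B x y (m + 1)) + S.B x y m)
    (h : S.B x y = fun m => if m = 0 then z else 0) :
    S.B x (S.der y) = linExp (S.der z) z := by
  funext k
  rcases k with _ | _ | k <;> simp [hsq.1, hsq.2, h, linExp]

/-- If `[a_λ b] = u + λ v`, then `[[a_λ b]_{λ+γ} c] = [u_{λ+γ} c] + λ [v_{λ+γ} c]`. -/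
theorem jacobi_sum_of_linExp {a b u v : V} (h : S.B a b = linExp u v) (c : V) (m n : ℕ) :
    ∑ j ∈ Finset.range (m + 1),
        ((Nat.choose (m - j + n) (m - j) : ℂ)) • S.B (S.B a b j) c (m - j + n) =
      ((m + n).choose m : ℂ) • S.B u c (m + n) +
        lam (fun k => ((k + n).choose k : ℂ) • S.B v c (k + n)) m := by
  rcases m with _ | m
  · simp [h, linExp, lam]
  · rw [Finset.sum_range_succ', Finset.sum_range_succ']
    simp [h, linExp, lam]
    exact add_comm _ _

end VAx.LCAData

theorem stmt_13_general {V : Type*} [AddCommGroup V] [Module ℂ V]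
    (S : VAx.LCAData V)
    (hsq1 : ∀ a b, S.B (S.der a) b 0 = 0 ∧ ∀ m, S.B (S.der a) b (m + 1) = - S.B a b m)
    (hsq2 : ∀ a b, S.B a (S.der b) 0 = S.der (S.B a b 0) ∧
      ∀ m, S.B a (S.der b) (m + 1) = S.der (S.B a b (m + 1)) + S.B a b m)
    (bar : V →ₗ[ℂ] V)
    (lb : V →ₗ[ℂ] V →ₗ[ℂ] V)
    (G : V) :
    ∀ (pa pb : Bool) (a b : V) (Δa Δb : ℂ), a ∈ S.part pa → b ∈ S.part pb →
      (S.B G a = fun m => match m with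
        | 0 => S.der (bar a) | 1 => (2 * Δa - 1) • bar a | _ => 0) →
      (S.B G b = fun m => match m with
        | 0 => S.der (bar b) | 1 => (2 * Δb - 1) • bar b | _ => 0) →
      (S.B G (bar a) = fun m => if m = 0 then a else 0) →
      (S.B G (bar b) = fun m => if m = 0 then b else 0) →
      (S.B a b = fun m => if m = 0 then lb a b else 0) →
      (S.B a (bar b) = fun m => if m = 0 then psgn pa • bar (lb a b) else 0) →
      (S.B (bar a) b = fun m => if m = 0 then bar (lb a b) else 0) →
      (S.B G (lb a b) = fun m => match m with
        | 0 => S.der (bar (lb a b))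
        | 1 => (2 * (Δa + Δb - 1) - 1) • bar (lb a b)
        | _ => 0) →
      ∀ m n, S.B G (S.B a b n) m =
        (∑ j ∈ Finset.range (m + 1),
          ((Nat.choose (m - j + n) (m - j) : ℂ)) • S.B (S.B G a j) b (m - j + n))
        + psgn pa • S.B a (S.B G b m) n := by
  intro pa pb a b Δa Δb _ _ hGa hGb _ _ hab habb hbab hGlb m n
  have hGa' : S.B G a = linExp (S.der (bar a)) ((2 * Δa - 1) • bar a) := hGa
  have hGb' : S.B G b = linExp (S.der (bar b)) ((2 * Δb - 1) • bar b) := hGb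
  have hGlb' : S.B G (lb a b) = linExp (S.der (bar (lb a b)))
      ((2 * (Δa + Δb - 1) - 1) • bar (lb a b)) := hGlb
  have hdab : ∀ k, S.B (S.der (bar a)) b k = if k = 1 then -bar (lb a b) else 0 :=
    S.B_der_left_of_const (hsq1 (bar a) b) hbab
  have hadb : S.B a (S.der (bar b)) =
      linExp (S.der (psgn pa • bar (lb a b))) (psgn pa • bar (lb a b)) :=
    S.B_der_right_of_const (hsq2 a (bar b)) habb
  rw [S.jacobi_sum_of_linExp hGa' b, hGb', hab]
  -- all three terms vanish unless `m ≤ 1` and `n ≤ 1`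
  rcases m with _ | _ | m <;> rcases n with _ | _ | n <;> cases pa <;>
    simp [hGlb', hdab, hadb, hbab, habb, linExp, lam, psgn, Nat.add_eq_one_iff] <;> module

/-- (Superconformal current algebra.) Let `g = ⊕_ω g_ω` be an `Ω`-graded Lie
superalgebra and `SVir ⊕ Cur(g)_{N=1}` the `ℂ[∂]`-module carrying the `N = 1` super-Virasoro
λ-brackets on `SVir = ℂ[∂](L, G) ⊕ ℂC` and, on `Cur(g)_{N=1} = ℂ[∂]⊗(g ⊕ ḡ)`,
`[a_λ b] = [a,b]`, `[a_λ b̄] = (-1)^{p(a)} overline([a,b])`, `[ā_λ b̄] = 0`, with cross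
brackets `[L_λ a] = (∂+Δ_a λ)a`, `[L_λ ā] = (∂+(Δ_a-1/2)λ)ā`, `[G_λ a] = (∂+(2Δ_a-1)λ)ā`,
`[G_λ ā] = a`, where `Δ_a = 1-ω` for `a ∈ g_ω` (so `Δ_{[a,b]} = Δ_a + Δ_b - 1`). Then this is
a Lie conformal algebra; in particular the Jacobi identity
`[G_λ [a_γ b]] = [[G_λ a]_{λ+γ} b] + (-1)^{p(a)}[a_γ [G_λ b]]` holds (coefficientwise). -/
theorem stmt_13 {V : Type*} [AddCommGroup V] [Module ℂ V]
    (S : VAx.LCAData V)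
    (hsq1 : ∀ a b, S.B (S.der a) b 0 = 0 ∧ ∀ m, S.B (S.der a) b (m + 1) = - S.B a b m)
    (hsq2 : ∀ a b, S.B a (S.der b) 0 = S.der (S.B a b 0) ∧
      ∀ m, S.B a (S.der b) (m + 1) = S.der (S.B a b (m + 1)) + S.B a b m)
    (bar : V →ₗ[ℂ] V) (hbarder : ∀ x, bar (S.der x) = S.der (bar x))
    (lb : V →ₗ[ℂ] V →ₗ[ℂ] V)
    (L G Cc : V) (hGp : G ∈ S.part true) (hLp : L ∈ S.part false)
    (hC : ∀ x m, S.B Cc x m = 0 ∧ S.B x Cc m = 0) (hdC : S.der Cc = 0)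
    (hLL : S.B L L = fun m => match m with
      | 0 => S.der L | 1 => (2 : ℂ) • L | 3 => (1 / 12 : ℂ) • Cc | _ => 0)
    (hLG : S.B L G = fun m => match m with
      | 0 => S.der G | 1 => (3 / 2 : ℂ) • G | _ => 0)
    (hGG : S.B G G = fun m => match m with
      | 0 => (2 : ℂ) • L | 2 => (1 / 3 : ℂ) • Cc | _ => 0) :
    ∀ (pa pb : Bool) (a b : V) (Δa Δb : ℂ), a ∈ S.part pa → b ∈ S.part pb →
      (S.B G a = fun m => match m with
        | 0 => S.der (bar a) | 1 => (2 * Δa - 1) • bar a | _ => 0) →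
      (S.B G b = fun m => match m with
        | 0 => S.der (bar b) | 1 => (2 * Δb - 1) • bar b | _ => 0) →
      (S.B G (bar a) = fun m => if m = 0 then a else 0) →
      (S.B G (bar b) = fun m => if m = 0 then b else 0) →
      (S.B a b = fun m => if m = 0 then lb a b else 0) →
      (S.B a (bar b) = fun m => if m = 0 then psgn pa • bar (lb a b) else 0) →
      (S.B (bar a) b = fun m => if m = 0 then bar (lb a b) else 0) →
      (S.B G (lb a b) = fun m => match m with
        | 0 => S.der (bar (lb a b))
        | 1 => (2 * (Δa + Δb - 1) - 1) • bar (lb a b)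
        | _ => 0) →
      ∀ m n, S.B G (S.B a b n) m =
        (∑ j ∈ Finset.range (m + 1),
          ((Nat.choose (m - j + n) (m - j) : ℂ)) • S.B (S.B G a j) b (m - j + n))
        + psgn pa • S.B a (S.B G b m) n :=
  stmt_13_general S hsq1 hsq2 bar lb G
end
end

section
/- Let R̃ = ℂ[∂]⊗(ℂL ⊕ ℂL̄) be a Lie conformal algebra with L even, L̄ odd, [L_λ L] = (∂+2λ)L, [L_λ L̄] = (∂+Δλ)L̄ for some Δ ∈ ℂ, and an odd endomorphism D with D(L̄) = L, [D,D] = 2∂, such that ({L̄}, D) satisfies (SEF1) and (SEF2). Then [L̄_λ L̄] = (2-Δ)L, and moreover the Jacobi identity [L_λ [L̄_γ L̄]] = [[L_λ L̄]_{λ+γ} L̄] + [L̄_γ [L_λ L̄]] forces Δ ∈ {3/2, 2}. -/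
open scoped BigOperators
noncomputable section

open VAx VAx.LCAData

namespace VAx.LCAData

variable {V : Type*} [AddCommGroup V] [Module ℂ V]

theorem jacEq_one_zero_iff (S : LCAData V) {p q : Bool} {a b c : V} :
    S.JacEq p q a b c 1 0 ↔ S.B a (S.B b c 0) 1 =
      S.B (S.B a b 0) c 1 + S.B (S.B a b 1) c 0 + sgn p q • S.B b (S.B a c 1) 0 := by
  simp [JacEq, Finset.sum_range_succ]

variable {S : LCAData V}

theorem SEF.B_D_D_of_odd {D : Module.End ℂ V} {x y : V} (h : S.SEF D true x y) (m : ℕ) :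
    S.B (D x) (D y) m = D (S.B (D x) y m) + lam (S.B x y) m := by
  simpa [psgn] using h.1 m

variable {D : Module.End ℂ V} {L Lb : V} {Δ : ℂ}

/-- (SEF1) for `x = y = L̄` reads `[L_λ L] = D[L_λ L̄] + λ[L̄_λ L̄]`. -/
theorem B_odd_self_of_sef (hDLb : D Lb = L)
    (hLL : S.B L L = fun m => match m with
      | 0 => S.der L | 1 => (2 : ℂ) • L | _ => 0)
    (hLLb : S.B L Lb = fun m => match m with
      | 0 => S.der Lb | 1 => Δ • Lb | _ => 0)
    (hsef : S.SEF D true Lb Lb) :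
    S.B Lb Lb = fun m => if m = 0 then (2 - Δ) • L else 0 := by
  funext m
  have h := hsef.B_D_D_of_odd (m + 1)
  rw [hDLb, hLL, hLLb] at h
  rcases m with _ | m
  · simp only [lam, map_smul, hDLb] at h
    simp only [if_true, sub_smul, h, add_sub_cancel_left]
  · simpa [lam] using h.symm

/-- The `λ¹γ⁰` coefficient of the Jacobi identity for `(L, L̄, L̄)` reads
`2(2-Δ)L = (2-Δ)(2Δ-1)L`. -/
theorem smul_eq_zero_of_jacEq
    (hsesq : S.B (S.der Lb) Lb 1 = - S.B Lb Lb 0)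
    (hLL : S.B L L = fun m => match m with
      | 0 => S.der L | 1 => (2 : ℂ) • L | _ => 0)
    (hLLb : S.B L Lb = fun m => match m with
      | 0 => S.der Lb | 1 => Δ • Lb | _ => 0)
    (hLbLb : S.B Lb Lb 0 = (2 - Δ) • L)
    (hjac : S.JacEq false true L Lb Lb 1 0) :
    ((2 - Δ) * (2 * Δ - 3)) • L = 0 := by
  rw [jacEq_one_zero_iff] at hjac
  simp only [hLLb, hsesq, hLL, map_smul, LinearMap.smul_apply, Pi.smul_apply, hLbLb, sgn,
    Bool.false_and, Bool.false_eq_true, if_false, one_smul] at hjac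
  linear_combination (norm := module) -hjac

end VAx.LCAData

theorem stmt_15_general {V : Type*} [AddCommGroup V] [Module ℂ V]
    (S : VAx.LCAData V)
    (hsq1 : ∀ a b, S.B (S.der a) b 0 = 0 ∧ ∀ m, S.B (S.der a) b (m + 1) = - S.B a b m)
    (L Lb : V) (Δ : ℂ)
    (hL0 : L ≠ 0)
    (D : Module.End ℂ V) (hDLb : D Lb = L)
    (hLL : S.B L L = fun m => match m with
      | 0 => S.der L | 1 => (2 : ℂ) • L | _ => 0)
    (hLLb : S.B L Lb = fun m => match m with
      | 0 => S.der Lb | 1 => Δ • Lb | _ => 0)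
    (hsef : S.SEF D true Lb Lb)
    (hjac : ∀ m n, S.JacEq false true L Lb Lb m n) :
    (S.B Lb Lb = fun m => if m = 0 then (2 - Δ) • L else 0) ∧
    (Δ = 3 / 2 ∨ Δ = 2) := by
  have hLbLb := B_odd_self_of_sef hDLb hLL hLLb hsef
  refine ⟨hLbLb, ?_⟩
  have hLbLb0 : S.B Lb Lb 0 = (2 - Δ) • L := by simp [hLbLb]
  have hzero := smul_eq_zero_of_jacEq ((hsq1 Lb Lb).2 0) hLL hLLb hLbLb0 (hjac 1 0)
  rcases mul_eq_zero.mp ((smul_eq_zero_iff_left hL0).mp hzero) with h | h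
  · right; linear_combination -h
  · left; linear_combination h / 2

/-- Let `R̃ = ℂ[∂]⊗(ℂL ⊕ ℂL̄)` be a Lie conformal algebra with `L` even, `L̄`
odd, `[L_λ L] = (∂+2λ)L`, `[L_λ L̄] = (∂+Δλ)L̄`, and an odd endomorphism `D` with `D(L̄) = L`,
`[D,D] = 2∂`, such that `({L̄}, D)` satisfies (SEF1) and (SEF2). Then `[L̄_λ L̄] = (2-Δ)L`,
and the Jacobi identity `[L_λ [L̄_γ L̄]] = [[L_λ L̄]_{λ+γ} L̄] + [L̄_γ [L_λ L̄]]` forces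
`Δ ∈ {3/2, 2}`. -/
theorem stmt_15 {V : Type*} [AddCommGroup V] [Module ℂ V]
    (S : VAx.LCAData V)
    (hsq1 : ∀ a b, S.B (S.der a) b 0 = 0 ∧ ∀ m, S.B (S.der a) b (m + 1) = - S.B a b m)
    (hsq2 : ∀ a b, S.B a (S.der b) 0 = S.der (S.B a b 0) ∧
      ∀ m, S.B a (S.der b) (m + 1) = S.der (S.B a b (m + 1)) + S.B a b m)
    (L Lb : V) (Δ : ℂ) (hLp : L ∈ S.part false) (hLbp : Lb ∈ S.part true)
    (hL0 : L ≠ 0)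
    (D : Module.End ℂ V) (hDLb : D Lb = L) (hDL : D L = S.der Lb)
    (hDD : ∀ x, D (D x) = S.der x)
    (hLL : S.B L L = fun m => match m with
      | 0 => S.der L | 1 => (2 : ℂ) • L | _ => 0)
    (hLLb : S.B L Lb = fun m => match m with
      | 0 => S.der Lb | 1 => Δ • Lb | _ => 0)
    (hsef : S.SEF D true Lb Lb)
    (hjac : ∀ m n, S.JacEq false true L Lb Lb m n) :
    (S.B Lb Lb = fun m => if m = 0 then (2 - Δ) • L else 0) ∧
    (Δ = 3 / 2 ∨ Δ = 2) :=
  stmt_15_general S hsq1 L Lb Δ hL0 D hDLb hLL hLLb hsef hjac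
end
end

section
/- In the extended bc–βγ system (a vertex algebra with even generators α,β,γ,δ, odd generators a,b,c,d, and central C, with non-zero λ-brackets [β_λ γ] = C = -[γ_λ β], [b_λ c] = C = [c_λ b], [α_λ δ] = C = -[δ_λ α], [d_λ a] = -C = [a_λ d]), the odd endomorphisms D¹, D² defined by D¹(b)=β, D¹(α)=a, D¹(d)=δ, D¹(γ)=c (and D¹ of those images via [D¹,D¹]=2∂), D²(α)=b, D²(-a)=β, D²(γ)=d, D²(-c)=δ, with [Dⁱ,Dʲ]=2δ_{ij}∂, make both pairs ({b,α,d,γ}, D¹) and ({-a,α,-c,γ}, D²) satisfy the supersymmetric extension formulas (SEF1) and (SEF2) for all pairs of generators; consequently D¹ and D² are odd derivations of the λ-bracket on the generators. -/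
open scoped BigOperators
noncomputable section

open VAx VAx.LCAData

/-- Parities of the generators `β, γ, b, c, α, δ, a, d` (indices `0,…,7`) of the extended
`bc`–`βγ` system: `β, γ, α, δ` even, `b, c, a, d` odd. -/
def pv : Fin 8 → Bool := ![false, false, true, true, false, false, true, true]

/-- Structure constants of the extended `bc`–`βγ` system: with generators ordered as
`β, γ, b, c, α, δ, a, d`, the nonzero λ-brackets are `[β_λ γ] = C = -[γ_λ β]`,
`[b_λ c] = C = [c_λ b]`, `[α_λ δ] = C = -[δ_λ α]`, `[d_λ a] = -C = [a_λ d]`. -/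
def kmat : Fin 8 → Fin 8 → ℂ := fun i j =>
  !![0, 1, 0, 0, 0, 0, 0, 0;
     -1, 0, 0, 0, 0, 0, 0, 0;
     0, 0, 0, 1, 0, 0, 0, 0;
     0, 0, 1, 0, 0, 0, 0, 0;
     0, 0, 0, 0, 0, 1, 0, 0;
     0, 0, 0, 0, -1, 0, 0, 0;
     0, 0, 0, 0, 0, 0, 0, -1;
     0, 0, 0, 0, 0, 0, -1, 0] i j

/-! All brackets among the generators are multiples of the central element `C`, concentrated in
degree `λ⁰`, and `D¹`, `D²` kill `C`; so every instance of (SEF1) and (SEF2) reduces to a sign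
identity between structure constants.  The Leibniz rule needs no further computation: if
(SEF1), (SEF2) hold for `(x, y)`, then `D² = ∂` and sesquilinearity give the Leibniz rule for
the four pairs `(x, y)`, `(Dx, y)`, `(x, Dy)`, `(Dx, Dy)`; and up to sign every generator is
an element of `{b, α, d, γ}` (resp. `{-a, α, -c, γ}`) or its image under `D¹` (resp. `D²`). -/

namespace VAx

@[simp] lemma psgn_false : psgn false = 1 := rfl

@[simp] lemma psgn_true : psgn true = -1 := rfl

namespace LCAData

variable {V : Type*} [AddCommGroup V] [Module ℂ V] (S : LCAData V)

lemma B_der_left_eq_neg_lam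
    (hsq1 : ∀ a b, S.B (S.der a) b 0 = 0 ∧ ∀ m, S.B (S.der a) b (m + 1) = - S.B a b m)
    (a b : V) (m : ℕ) : S.B (S.der a) b m = - lam (S.B a b) m := by
  cases m with
  | zero => simp [lam, (hsq1 a b).1]
  | succ m => exact (hsq1 a b).2 m

lemma B_der_right_eq_der_add_lam
    (hsq2 : ∀ a b, S.B a (S.der b) 0 = S.der (S.B a b 0) ∧
      ∀ m, S.B a (S.der b) (m + 1) = S.der (S.B a b (m + 1)) + S.B a b m)
    (a b : V) (m : ℕ) : S.B a (S.der b) m = S.der (S.B a b m) + lam (S.B a b) m := by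
  cases m with
  | zero => simp [lam, (hsq2 a b).1]
  | succ m => exact (hsq2 a b).2 m

def IsDerivPair (D : Module.End ℂ V) (p : Bool) (x y : V) : Prop :=
  ∀ m, D (S.B x y m) = S.B (D x) y m + psgn p • S.B x (D y) m

variable {S} {D : Module.End ℂ V} {p : Bool} {x y : V}

lemma IsDerivPair.smul_left (h : S.IsDerivPair D p x y) (s : ℂ) :
    S.IsDerivPair D p (s • x) y := by
  intro m
  simp only [map_smul, LinearMap.smul_apply, Pi.smul_apply, h m, smul_add, smul_comm s (psgn p)]

lemma IsDerivPair.smul_right (h : S.IsDerivPair D p x y) (s : ℂ) :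
    S.IsDerivPair D p x (s • y) := by
  intro m
  simp only [map_smul, Pi.smul_apply, h m, smul_add, smul_comm s (psgn p)]

theorem SEF.isDerivPair (h : S.SEF D p x y) : S.IsDerivPair D p x y := by
  intro m
  rw [h.2 m]
  cases p <;> simp

theorem SEF.isDerivPair_D_left (hD : ∀ z, D (D z) = S.der z)
    (hl : ∀ a b m, S.B (S.der a) b m = - lam (S.B a b) m) (h : S.SEF D p x y) :
    S.IsDerivPair D (!p) (D x) y := by
  intro m
  rw [hD, hl, h.1 m]
  cases p <;> simp

theorem SEF.isDerivPair_D_right (hD : ∀ z, D (D z) = S.der z)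
    (hr : ∀ a b m, S.B a (S.der b) m = S.der (S.B a b m) + lam (S.B a b) m)
    (h : S.SEF D p x y) : S.IsDerivPair D p x (D y) := by
  intro m
  rw [hD, hr, h.1 m, h.2 m]
  cases p <;> simp [hD] <;> abel

theorem SEF.isDerivPair_D_D (hD : ∀ z, D (D z) = S.der z)
    (hl : ∀ a b m, S.B (S.der a) b m = - lam (S.B a b) m)
    (hr : ∀ a b m, S.B a (S.der b) m = S.der (S.B a b m) + lam (S.B a b) m)
    (h : S.SEF D p x y) : S.IsDerivPair D (!p) (D x) (D y) := by
  intro m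
  have hxDy : S.B x (D y) = fun k => psgn (!p) • (S.B (D x) y k - D (S.B x y k)) :=
    funext h.2
  rw [hD, hD, hl, hr, hxDy, h.1 m]
  cases m <;> cases p <;> simp [lam, hD] <;> abel

variable (D) in
def IsMultipleOfGen (L : List (V × Bool)) (u : V) (q : Bool) : Prop :=
  ∃ xp ∈ L, ∃ s : ℂ, (u = s • xp.1 ∧ q = xp.2) ∨ (u = s • D xp.1 ∧ q = !xp.2)

theorem isDerivPair_of_forall_sef {L : List (V × Bool)} (hD : ∀ z, D (D z) = S.der z)
    (hl : ∀ a b m, S.B (S.der a) b m = - lam (S.B a b) m)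
    (hr : ∀ a b m, S.B a (S.der b) m = S.der (S.B a b m) + lam (S.B a b) m)
    (hL : ∀ xp ∈ L, ∀ yp ∈ L, S.SEF D xp.2 xp.1 yp.1) {u w : V} {q r : Bool}
    (hu : IsMultipleOfGen D L u q) (hw : IsMultipleOfGen D L w r) : S.IsDerivPair D q u w := by
  obtain ⟨⟨x, p⟩, hx, s, hu⟩ := hu
  obtain ⟨⟨y, p'⟩, hy, t, hw⟩ := hw
  have h := hL _ hx _ hy
  rcases hu with ⟨rfl, rfl⟩ | ⟨rfl, rfl⟩ <;> rcases hw with ⟨rfl, -⟩ | ⟨rfl, -⟩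
  · exact (h.isDerivPair.smul_left s).smul_right t
  · exact ((h.isDerivPair_D_right hD hr).smul_left s).smul_right t
  · exact ((h.isDerivPair_D_left hD hl).smul_left s).smul_right t
  · exact ((h.isDerivPair_D_D hD hl hr).smul_left s).smul_right t

theorem sef_of_B_eq_single {c₁ c₂ c₃ c₄ : V} (hxy : S.B x y = Pi.single 0 c₁)
    (hDxy : S.B (D x) y = Pi.single 0 c₂) (hxDy : S.B x (D y) = Pi.single 0 c₃)
    (hDxDy : S.B (D x) (D y) = Pi.single 0 c₄) (h₁ : c₁ = 0)
    (h₃ : c₃ = psgn (!p) • c₂) (h₄ : c₄ = psgn (!p) • D c₂) : S.SEF D p x y := by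
  refine ⟨fun m => ?_, fun m => ?_⟩ <;>
    rcases m with _ | m <;> simp [hxy, hDxy, hxDy, hDxDy, h₁, h₃, h₄, lam]

end LCAData

end VAx

section Generators

variable {V : Type*} [AddCommGroup V] [Module ℂ V] {S : LCAData V} {v : Fin 8 → V} {C : V}
  {D : Module.End ℂ V}

theorem sef_D1_generators (hbr : ∀ i j, S.B (v i) (v j) = Pi.single 0 (kmat i j • C))
    (hDC : D C = 0) (hb : D (v 2) = v 0) (hα : D (v 4) = v 6) (hd : D (v 7) = v 5)
    (hγ : D (v 1) = v 3) :
    ∀ xp ∈ [(v 2, true), (v 4, false), (v 7, true), (v 1, false)],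
    ∀ yp ∈ [(v 2, true), (v 4, false), (v 7, true), (v 1, false)],
      S.SEF D xp.2 xp.1 yp.1 := by
  simp only [List.forall_mem_cons, List.not_mem_nil, IsEmpty.forall_iff, implies_true, and_true]
  refine ⟨⟨?_, ?_, ?_, ?_⟩, ⟨?_, ?_, ?_, ?_⟩, ⟨?_, ?_, ?_, ?_⟩, ⟨?_, ?_, ?_, ?_⟩⟩ <;>
    apply sef_of_B_eq_single <;>
    -- the bracket goals come first and fix `c₁, …, c₄` by unification
    first
    | (simp only [hbr, hb, hα, hd, hγ] <;> rfl)
    | simp [kmat, hDC]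

theorem sef_D2_generators (hbr : ∀ i j, S.B (v i) (v j) = Pi.single 0 (kmat i j • C))
    (hDC : D C = 0) (hα : D (v 4) = v 2) (ha : D (v 6) = -(v 0)) (hγ : D (v 1) = v 7)
    (hc : D (v 3) = -(v 5)) :
    ∀ xp ∈ [(-(v 6), true), (v 4, false), (-(v 3), true), (v 1, false)],
    ∀ yp ∈ [(-(v 6), true), (v 4, false), (-(v 3), true), (v 1, false)],
      S.SEF D xp.2 xp.1 yp.1 := by
  simp only [List.forall_mem_cons, List.not_mem_nil, IsEmpty.forall_iff, implies_true, and_true]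
  refine ⟨⟨?_, ?_, ?_, ?_⟩, ⟨?_, ?_, ?_, ?_⟩, ⟨?_, ?_, ?_, ?_⟩, ⟨?_, ?_, ?_, ?_⟩⟩ <;>
    apply sef_of_B_eq_single <;>
    first
    | (simp only [map_neg, LinearMap.neg_apply, neg_neg, hbr, ← Pi.single_neg, hα, ha, hγ, hc]
        <;> rfl)
    | simp [kmat, hDC]

theorem generator_isMultipleOfGen_D1 (hb : D (v 2) = v 0) (hα : D (v 4) = v 6)
    (hd : D (v 7) = v 5) (hγ : D (v 1) = v 3) (i : Fin 8) :
    IsMultipleOfGen D [(v 2, true), (v 4, false), (v 7, true), (v 1, false)] (v i) (pv i) := by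
  fin_cases i
  · exact ⟨(v 2, true), by simp, 1, .inr ⟨by simp [hb], rfl⟩⟩
  · exact ⟨(v 1, false), by simp, 1, .inl ⟨by simp, rfl⟩⟩
  · exact ⟨(v 2, true), by simp, 1, .inl ⟨by simp, rfl⟩⟩
  · exact ⟨(v 1, false), by simp, 1, .inr ⟨by simp [hγ], rfl⟩⟩
  · exact ⟨(v 4, false), by simp, 1, .inl ⟨by simp, rfl⟩⟩
  · exact ⟨(v 7, true), by simp, 1, .inr ⟨by simp [hd], rfl⟩⟩
  · exact ⟨(v 4, false), by simp, 1, .inr ⟨by simp [hα], rfl⟩⟩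
  · exact ⟨(v 7, true), by simp, 1, .inl ⟨by simp, rfl⟩⟩

theorem generator_isMultipleOfGen_D2 (hα : D (v 4) = v 2) (ha : D (v 6) = -(v 0))
    (hγ : D (v 1) = v 7) (hc : D (v 3) = -(v 5)) (i : Fin 8) :
    IsMultipleOfGen D [(-(v 6), true), (v 4, false), (-(v 3), true), (v 1, false)]
      (v i) (pv i) := by
  fin_cases i
  · exact ⟨(-(v 6), true), by simp, 1, .inr ⟨by simp [ha], rfl⟩⟩
  · exact ⟨(v 1, false), by simp, 1, .inl ⟨by simp, rfl⟩⟩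
  · exact ⟨(v 4, false), by simp, 1, .inr ⟨by simp [hα], rfl⟩⟩
  · exact ⟨(-(v 3), true), by simp, -1, .inl ⟨by simp, rfl⟩⟩
  · exact ⟨(v 4, false), by simp, 1, .inl ⟨by simp, rfl⟩⟩
  · exact ⟨(-(v 3), true), by simp, 1, .inr ⟨by simp [hc], rfl⟩⟩
  · exact ⟨(-(v 6), true), by simp, -1, .inl ⟨by simp, rfl⟩⟩
  · exact ⟨(v 1, false), by simp, 1, .inr ⟨by simp [hγ], rfl⟩⟩

end Generators

theorem stmt_17_general {V : Type*} [AddCommGroup V] [Module ℂ V]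
    (S : VAx.LCAData V)
    (hsq1 : ∀ a b, S.B (S.der a) b 0 = 0 ∧ ∀ m, S.B (S.der a) b (m + 1) = - S.B a b m)
    (hsq2 : ∀ a b, S.B a (S.der b) 0 = S.der (S.B a b 0) ∧
      ∀ m, S.B a (S.der b) (m + 1) = S.der (S.B a b (m + 1)) + S.B a b m)
    (v : Fin 8 → V) (C : V)
    (hbr : ∀ i j, S.B (v i) (v j) = fun m => if m = 0 then kmat i j • C else 0)
    (D1 D2 : Module.End ℂ V)
    (hD1 : D1 (v 2) = v 0 ∧ D1 (v 4) = v 6 ∧ D1 (v 7) = v 5 ∧ D1 (v 1) = v 3 ∧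
      D1 (v 0) = S.der (v 2) ∧ D1 (v 6) = S.der (v 4) ∧ D1 (v 5) = S.der (v 7) ∧
      D1 (v 3) = S.der (v 1))
    (hD2 : D2 (v 4) = v 2 ∧ D2 (v 6) = -(v 0) ∧ D2 (v 1) = v 7 ∧ D2 (v 3) = -(v 5) ∧
      D2 (v 2) = S.der (v 4) ∧ D2 (v 0) = -(S.der (v 6)) ∧ D2 (v 7) = S.der (v 1) ∧
      D2 (v 5) = -(S.der (v 3)))
    (hD1C : D1 C = 0) (hD2C : D2 C = 0)
    (h11 : ∀ x, D1 (D1 x) = S.der x) (h22 : ∀ x, D2 (D2 x) = S.der x) :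
    (∀ i ∈ ({2, 4, 7, 1} : Finset (Fin 8)), ∀ j ∈ ({2, 4, 7, 1} : Finset (Fin 8)),
      S.SEF D1 (pv i) (v i) (v j)) ∧
    (∀ xp ∈ ([(-(v 6), true), (v 4, false), (-(v 3), true), (v 1, false)] : List (V × Bool)),
     ∀ yp ∈ ([(-(v 6), true), (v 4, false), (-(v 3), true), (v 1, false)] : List (V × Bool)),
      S.SEF D2 xp.2 xp.1 yp.1) ∧
    (∀ i j m, D1 (S.B (v i) (v j) m)
      = S.B (D1 (v i)) (v j) m + psgn (pv i) • S.B (v i) (D1 (v j)) m) ∧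
    (∀ i j m, D2 (S.B (v i) (v j) m)
      = S.B (D2 (v i)) (v j) m + psgn (pv i) • S.B (v i) (D2 (v j)) m) := by
  obtain ⟨h1b, h1α, h1d, h1γ, -⟩ := hD1
  obtain ⟨h2α, h2a, h2γ, h2c, -⟩ := hD2
  have hbr_single (i j : Fin 8) : S.B (v i) (v j) = Pi.single 0 (kmat i j • C) := by
    rw [hbr]
    funext m
    rcases m with _ | m <;> simp
  have hl := S.B_der_left_eq_neg_lam hsq1
  have hr := S.B_der_right_eq_der_add_lam hsq2
  have hsef1 := sef_D1_generators hbr_single hD1C h1b h1α h1d h1γ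
  have hsef2 := sef_D2_generators hbr_single hD2C h2α h2a h2γ h2c
  have hgen1 := generator_isMultipleOfGen_D1 h1b h1α h1d h1γ
  have hgen2 := generator_isMultipleOfGen_D2 h2α h2a h2γ h2c
  refine ⟨fun i hi j hj => ?_, hsef2,
    fun i j => isDerivPair_of_forall_sef h11 hl hr hsef1 (hgen1 i) (hgen1 j),
    fun i j => isDerivPair_of_forall_sef h22 hl hr hsef2 (hgen2 i) (hgen2 j)⟩
  simp only [Finset.mem_insert, Finset.mem_singleton] at hi hj
  exact hsef1 (v i, pv i) (by rcases hi with rfl | rfl | rfl | rfl <;> simp [pv])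
    (v j, pv j) (by rcases hj with rfl | rfl | rfl | rfl <;> simp [pv])

/-- In the extended `bc`–`βγ` system (generators `v 0 = β`, `v 1 = γ`,
`v 2 = b`, `v 3 = c`, `v 4 = α`, `v 5 = δ`, `v 6 = a`, `v 7 = d` and central `C`, with
λ-brackets given by `kmat`), the odd endomorphisms `D¹, D²` with `D¹(b) = β`, `D¹(α) = a`,
`D¹(d) = δ`, `D¹(γ) = c` (and the images forced by `[D¹,D¹] = 2∂`), `D²(α) = b`,
`D²(-a) = β`, `D²(γ) = d`, `D²(-c) = δ` (and the images forced by `[D²,D²] = 2∂`), with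
`[Dⁱ,Dʲ] = 2δ_{ij}∂`, make both pairs `({b, α, d, γ}, D¹)` and `({-a, α, -c, γ}, D²)` satisfy
the supersymmetric extension formulas (SEF1), (SEF2) for all pairs of generators;
consequently `D¹` and `D²` are odd derivations of the λ-bracket on the generators. -/
theorem stmt_17 {V : Type*} [AddCommGroup V] [Module ℂ V]
    (S : VAx.LCAData V)
    (hsq1 : ∀ a b, S.B (S.der a) b 0 = 0 ∧ ∀ m, S.B (S.der a) b (m + 1) = - S.B a b m)
    (hsq2 : ∀ a b, S.B a (S.der b) 0 = S.der (S.B a b 0) ∧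
      ∀ m, S.B a (S.der b) (m + 1) = S.der (S.B a b (m + 1)) + S.B a b m)
    (v : Fin 8 → V) (C : V)
    (hpar : ∀ i, v i ∈ S.part (pv i)) (hCp : C ∈ S.part false)
    (hC : ∀ x m, S.B C x m = 0 ∧ S.B x C m = 0) (hdC : S.der C = 0)
    (hbr : ∀ i j, S.B (v i) (v j) = fun m => if m = 0 then kmat i j • C else 0)
    (D1 D2 : Module.End ℂ V)
    (hD1 : D1 (v 2) = v 0 ∧ D1 (v 4) = v 6 ∧ D1 (v 7) = v 5 ∧ D1 (v 1) = v 3 ∧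
      D1 (v 0) = S.der (v 2) ∧ D1 (v 6) = S.der (v 4) ∧ D1 (v 5) = S.der (v 7) ∧
      D1 (v 3) = S.der (v 1))
    (hD2 : D2 (v 4) = v 2 ∧ D2 (v 6) = -(v 0) ∧ D2 (v 1) = v 7 ∧ D2 (v 3) = -(v 5) ∧
      D2 (v 2) = S.der (v 4) ∧ D2 (v 0) = -(S.der (v 6)) ∧ D2 (v 7) = S.der (v 1) ∧
      D2 (v 5) = -(S.der (v 3)))
    (hD1C : D1 C = 0) (hD2C : D2 C = 0)
    (h11 : ∀ x, D1 (D1 x) = S.der x) (h22 : ∀ x, D2 (D2 x) = S.der x)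
    (h12 : ∀ x, D1 (D2 x) + D2 (D1 x) = 0) :
    (∀ i ∈ ({2, 4, 7, 1} : Finset (Fin 8)), ∀ j ∈ ({2, 4, 7, 1} : Finset (Fin 8)),
      S.SEF D1 (pv i) (v i) (v j)) ∧
    (∀ xp ∈ ([(-(v 6), true), (v 4, false), (-(v 3), true), (v 1, false)] : List (V × Bool)),
     ∀ yp ∈ ([(-(v 6), true), (v 4, false), (-(v 3), true), (v 1, false)] : List (V × Bool)),
      S.SEF D2 xp.2 xp.1 yp.1) ∧
    (∀ i j m, D1 (S.B (v i) (v j) m)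
      = S.B (D1 (v i)) (v j) m + psgn (pv i) • S.B (v i) (D1 (v j)) m) ∧
    (∀ i j m, D2 (S.B (v i) (v j) m)
      = S.B (D2 (v i)) (v j) m + psgn (pv i) • S.B (v i) (D2 (v j)) m) :=
  stmt_17_general S hsq1 hsq2 v C hbr D1 D2 hD1 hD2 hD1C hD2C h11 h22
end
end

section
/- Let V be a vertex algebra with an N=1 superconformal vector G admitting a decomposition G = G⁺ + G⁻ with (G^±_{(0)}G^±)_{(0)} = 0 (as operators on V). Then for any μ ∈ ℂ*, the operators D¹ = (μG⁺ + μ⁻¹G⁻)_{(0)} and D² = √-1(μG⁺ - μ⁻¹G⁻)_{(0)} satisfy [Dⁱ,Dʲ] = 2δ_{ij}∂ for i,j ∈ {1,2}. -/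
open scoped BigOperators
noncomputable section

open VAx VAx.LCAData VAx.VAData

/-!
Write `P = G⁺₍₀₎` and `M = G⁻₍₀₎`. For odd `a, b` the Jacobi identity gives
`a₍₀₎b₍₀₎ + b₍₀₎a₍₀₎ = (a₍₀₎b)₍₀₎`, so the hypotheses say `P² = M² = 0` and
`(P + M)² = G₍₀₎² = L₍₀₎ = ∂`, i.e. `PM + MP = ∂`. The rest is algebra of two square-zero
elements: `(μP ± μ⁻¹M)² = ±(PM + MP)`, and `μP + μ⁻¹M` anticommutes with `μP - μ⁻¹M`.
-/

section SquareZeroSplitting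

variable {K A : Type*} [Field K] [Ring A] [Algebra K A] {P M : A}

theorem smul_add_inv_smul_mul_self (hP : P * P = 0) (hM : M * M = 0) {μ : K} (hμ : μ ≠ 0) :
    (μ • P + μ⁻¹ • M) * (μ • P + μ⁻¹ • M) = P * M + M * P := by
  simp only [mul_add, add_mul, smul_mul_smul_comm, hP, hM, smul_zero, mul_inv_cancel₀ hμ,
    inv_mul_cancel₀ hμ, one_smul, zero_add, add_zero]
  exact add_comm _ _

theorem smul_sub_inv_smul_mul_self (hP : P * P = 0) (hM : M * M = 0) {μ : K} (hμ : μ ≠ 0) :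
    (μ • P - μ⁻¹ • M) * (μ • P - μ⁻¹ • M) = -(P * M + M * P) := by
  simp only [mul_sub, sub_mul, smul_mul_smul_comm, hP, hM, smul_zero, mul_inv_cancel₀ hμ,
    inv_mul_cancel₀ hμ, one_smul]
  abel

theorem smul_add_inv_smul_anticomm_smul_sub_inv_smul (hP : P * P = 0) (hM : M * M = 0) (μ : K) :
    (μ • P + μ⁻¹ • M) * (μ • P - μ⁻¹ • M) + (μ • P - μ⁻¹ • M) * (μ • P + μ⁻¹ • M) = 0 := by
  simp only [mul_sub, sub_mul, mul_add, add_mul, smul_mul_smul_comm, hP, hM, smul_zero]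
  abel

end SquareZeroSplitting

namespace VAx.VAData

variable {V : Type*} [AddCommGroup V] [Module ℂ V] {S : VAData V}

@[simp]
theorem opAt_apply (a : V) (k : ℕ) (x : V) : S.opAt a k x = S.B a x k := rfl

theorem opAt_add (a b : V) (k : ℕ) : S.opAt (a + b) k = S.opAt a k + S.opAt b k := by
  ext x; simp

theorem opAt_sub (a b : V) (k : ℕ) : S.opAt (a - b) k = S.opAt a k - S.opAt b k := by
  ext x; simp

theorem opAt_smul (r : ℂ) (a : V) (k : ℕ) : S.opAt (r • a) k = r • S.opAt a k := by
  ext x; simp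

-- The Jacobi identity at the coefficient of `λ⁰γ⁰`.
theorem IsVA.opAt_zero_anticomm (hS : S.IsVA) {a b : V} (ha : a ∈ S.part true)
    (hb : b ∈ S.part true) :
    S.opAt a 0 * S.opAt b 0 + S.opAt b 0 * S.opAt a 0 = S.opAt (S.B a b 0) 0 := by
  ext x
  have h := hS.isLCA.jacobi true true a b x ha hb 0 0
  simp only [LCAData.JacEq, sgn, Bool.and_self, if_true, one_smul, neg_smul] at h
  simp [h]

theorem IsVA.opAt_zero_mul_self_eq_zero (hS : S.IsVA) {a : V} (ha : a ∈ S.part true)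
    (h : S.opAt (S.B a a 0) 0 = 0) : S.opAt a 0 * S.opAt a 0 = 0 := by
  have h2 := hS.opAt_zero_anticomm ha ha
  rw [h, ← two_smul ℂ] at h2
  exact (smul_eq_zero.mp h2).resolve_left two_ne_zero

theorem IsVA.opAt_zero_mul_self_of_isSCV (hS : S.IsVA) {G : V} {c : ℂ} (hsc : S.IsSCV G c) :
    S.opAt G 0 * S.opAt G 0 = S.der := by
  have hGG : S.opAt (S.B G G 0) 0 = (2 : ℂ) • S.der := by
    ext x
    -- `L₍₀₎ = ∂` for `L = ½ G₍₀₎G`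
    have hL := hsc.2.2.2.2.2.2.1 x
    simp only [map_smul, LinearMap.smul_apply, Pi.smul_apply] at hL
    simp [← hL, smul_smul]
  have h2 := hS.opAt_zero_anticomm hsc.1 hsc.1
  rw [hGG, ← two_smul ℂ] at h2
  exact smul_right_injective _ two_ne_zero h2

end VAx.VAData

/-- Let `V` be a vertex algebra with an `N = 1` superconformal vector `G`
admitting a decomposition `G = G⁺ + G⁻` with `(G^±₍₀₎G^±)₍₀₎ = 0` (as operators on `V`).
Then for any `μ ∈ ℂ*`, the operators `D¹ = (μG⁺ + μ⁻¹G⁻)₍₀₎` and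
`D² = √-1(μG⁺ - μ⁻¹G⁻)₍₀₎` satisfy `[Dⁱ,Dʲ] = 2δ_{ij}∂` for `i, j ∈ {1,2}`. -/
theorem stmt_18 {V : Type*} [AddCommGroup V] [Module ℂ V]
    (S : VAx.VAData V) (hS : S.IsVA) (G Gp Gm : V) (c : ℂ)
    (hGpp : Gp ∈ S.part true) (hGmp : Gm ∈ S.part true)
    (hsc : S.IsSCV G c) (hsplit : G = Gp + Gm)
    (hz1 : ∀ x, S.B (S.B Gp Gp 0) x 0 = 0)
    (hz2 : ∀ x, S.B (S.B Gm Gm 0) x 0 = 0) :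
    ∀ μ : ℂ, μ ≠ 0 →
      (S.opAt (μ • Gp + μ⁻¹ • Gm) 0 * S.opAt (μ • Gp + μ⁻¹ • Gm) 0
        + S.opAt (μ • Gp + μ⁻¹ • Gm) 0 * S.opAt (μ • Gp + μ⁻¹ • Gm) 0
        = (2 : ℂ) • S.der) ∧
      ((Complex.I • S.opAt (μ • Gp - μ⁻¹ • Gm) 0) * (Complex.I • S.opAt (μ • Gp - μ⁻¹ • Gm) 0)
        + (Complex.I • S.opAt (μ • Gp - μ⁻¹ • Gm) 0) * (Complex.I • S.opAt (μ • Gp - μ⁻¹ • Gm) 0)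
        = (2 : ℂ) • S.der) ∧
      (S.opAt (μ • Gp + μ⁻¹ • Gm) 0 * (Complex.I • S.opAt (μ • Gp - μ⁻¹ • Gm) 0)
        + (Complex.I • S.opAt (μ • Gp - μ⁻¹ • Gm) 0) * S.opAt (μ • Gp + μ⁻¹ • Gm) 0
        = 0) := by
  intro μ hμ
  set P := S.opAt Gp 0
  set M := S.opAt Gm 0
  have hP : P * P = 0 := hS.opAt_zero_mul_self_eq_zero hGpp (LinearMap.ext hz1)
  have hM : M * M = 0 := hS.opAt_zero_mul_self_eq_zero hGmp (LinearMap.ext hz2)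
  have hG : S.opAt G 0 = P + M := by rw [hsplit, opAt_add]
  have hPM : P * M + M * P = S.der := by
    rw [← hS.opAt_zero_mul_self_of_isSCV hsc, hG]
    noncomm_ring [hP, hM]
  have hD₁ : S.opAt (μ • Gp + μ⁻¹ • Gm) 0 = μ • P + μ⁻¹ • M := by
    rw [opAt_add, opAt_smul, opAt_smul]
  have hD₂ : S.opAt (μ • Gp - μ⁻¹ • Gm) 0 = μ • P - μ⁻¹ • M := by
    rw [opAt_sub, opAt_smul, opAt_smul]
  rw [hD₁, hD₂]
  refine ⟨?_, ?_, ?_⟩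
  · rw [smul_add_inv_smul_mul_self hP hM hμ, hPM, two_smul]
  · rw [smul_mul_smul_comm, Complex.I_mul_I, smul_sub_inv_smul_mul_self hP hM hμ, hPM,
      neg_one_smul, neg_neg, two_smul]
  · rw [mul_smul_comm, smul_mul_assoc, ← smul_add,
      smul_add_inv_smul_anticomm_smul_sub_inv_smul hP hM, smul_zero]
end
end
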